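/- arXiv:1305.7315 — 3 statements merged into one kernel-verified Lean document; each statement's English description precedes it below -/
import Mathlib

section
/- Let u be a map defined and smooth on an open neighborhood of the closed unit ball closure(B^5) in ℝ⁵, with values in ℝ^ℓ satisfying |u(x)| = 1 for every x. Then ∫_{B^5}‖∇u(x)‖⁴ dx ≤ 49 · ∫_{B^5}‖∇²u(x)‖² dx. -/
open MeasureTheory Metric Set Filter RealInnerProductSpace

noncomputable section

abbrev E (n : ℕ) : Type := EuclideanSpace ℝ (Fin n)

local notation "⟪" x ", " y "⟫_ℝ" => @inner ℝ _ _ x y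

/-- If `u` is smooth on an open neighborhood of the closed unit ball in `ℝ⁵` with
unit-length values in `ℝ^ℓ`, then `∫_{B⁵}‖∇u‖⁴ ≤ 49·∫_{B⁵}‖∇²u‖²`. -/
theorem stmt5 (ℓ : ℕ) (u : E 5 → E ℓ) (U : Set (E 5)) (hU : IsOpen U)
    (hUB : closedBall (0 : E 5) 1 ⊆ U) (hu : ContDiffOn ℝ (⊤ : ℕ∞) u U)
    (hnorm : ∀ x ∈ U, ‖u x‖ = 1) :
    ∫ x in ball (0 : E 5) 1, ‖fderiv ℝ u x‖^4 ≤
      49 * ∫ x in ball (0 : E 5) 1, ‖fderiv ℝ (fderiv ℝ u) x‖^2 := by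
  have hdu : ∀ y ∈ U, DifferentiableAt ℝ u y := fun y hy =>
    (hu.contDiffAt (hU.mem_nhds hy)).differentiableAt (by simp)
  have hdu2 : ∀ y ∈ U, DifferentiableAt ℝ (fderiv ℝ u) y := fun y hy =>
    (((hu.contDiffAt (hU.mem_nhds hy)).fderiv_right (m := (⊤ : ℕ∞)) le_rfl)).differentiableAt (by simp)
  -- Step 1: ⟪u y, ∇u(y) v⟫ = 0 for y ∈ U.
  have step1 : ∀ y ∈ U, ∀ v, ⟪u y, fderiv ℝ u y v⟫_ℝ = 0 := by
    intro y hy v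
    have heq : (fun z => ⟪u z, u z⟫_ℝ) =ᶠ[nhds y] fun _ => (1 : ℝ) := by
      filter_upwards [hU.mem_nhds hy] with z hz
      rw [real_inner_self_eq_norm_sq, hnorm z hz]; norm_num
    have h0 : fderiv ℝ (fun z => ⟪u z, u z⟫_ℝ) y = 0 := by
      rw [heq.fderiv_eq]; exact fderiv_const_apply 1
    have hform := fderiv_inner_apply (𝕜 := ℝ) (hdu y hy) (hdu y hy) v
    rw [h0] at hform
    simp only [ContinuousLinearMap.zero_apply] at hform
    have hc : ⟪u y, fderiv ℝ u y v⟫_ℝ = ⟪fderiv ℝ u y v, u y⟫_ℝ := real_inner_comm _ _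
    linarith [hform, hc]
  -- Step 2: pointwise ‖∇u‖² ≤ ‖∇²u‖.
  have key : ∀ x ∈ U, ‖fderiv ℝ u x‖ ^ 2 ≤ ‖fderiv ℝ (fderiv ℝ u) x‖ := by
    intro x hx
    have hbound : ∀ v : E 5, ‖fderiv ℝ u x v‖ ^ 2 ≤
        ‖fderiv ℝ (fderiv ℝ u) x‖ * ‖v‖ ^ 2 := by
      intro v
      -- φ(y) = ⟪u y, ∇u(y) v⟫ vanishes on U, hence its derivative vanishes at x.
      have hg : DifferentiableAt ℝ (fun y => fderiv ℝ u y v) x :=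
        (hdu2 x hx).clm_apply (differentiableAt_const v)
      have hφeq : (fun y => ⟪u y, fderiv ℝ u y v⟫_ℝ) =ᶠ[nhds x] fun _ => (0 : ℝ) := by
        filter_upwards [hU.mem_nhds hx] with z hz
        exact step1 z hz v
      have hφ0 : fderiv ℝ (fun y => ⟪u y, fderiv ℝ u y v⟫_ℝ) x = 0 := by
        rw [hφeq.fderiv_eq]; exact fderiv_const_apply 0
      have hform := fderiv_inner_apply (𝕜 := ℝ) (hdu x hx) hg v
      rw [hφ0] at hform
      simp only [ContinuousLinearMap.zero_apply] at hform
      have hgder : fderiv ℝ (fun y => fderiv ℝ u y v) x v =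
          (fderiv ℝ (fderiv ℝ u) x v) v := by
        rw [fderiv_clm_apply (hdu2 x hx) (differentiableAt_const v)]
        simp
      rw [hgder] at hform
      have h1 : ‖fderiv ℝ u x v‖ ^ 2 = -⟪u x, (fderiv ℝ (fderiv ℝ u) x v) v⟫_ℝ := by
        rw [← real_inner_self_eq_norm_sq]
        linarith
      have h2 : -⟪u x, (fderiv ℝ (fderiv ℝ u) x v) v⟫_ℝ ≤
          ‖u x‖ * ‖(fderiv ℝ (fderiv ℝ u) x v) v‖ := by
        calc -⟪u x, (fderiv ℝ (fderiv ℝ u) x v) v⟫_ℝ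
            ≤ |⟪u x, (fderiv ℝ (fderiv ℝ u) x v) v⟫_ℝ| := neg_le_abs _
          _ ≤ ‖u x‖ * ‖(fderiv ℝ (fderiv ℝ u) x v) v‖ := abs_real_inner_le_norm _ _
      have h3 : ‖(fderiv ℝ (fderiv ℝ u) x v) v‖ ≤
          ‖fderiv ℝ (fderiv ℝ u) x‖ * ‖v‖ ^ 2 := by
        calc ‖(fderiv ℝ (fderiv ℝ u) x v) v‖
            ≤ ‖fderiv ℝ (fderiv ℝ u) x v‖ * ‖v‖ := ContinuousLinearMap.le_opNorm _ _
          _ ≤ (‖fderiv ℝ (fderiv ℝ u) x‖ * ‖v‖) * ‖v‖ := by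
              gcongr; exact ContinuousLinearMap.le_opNorm _ _
          _ = ‖fderiv ℝ (fderiv ℝ u) x‖ * ‖v‖ ^ 2 := by ring
      have hux : ‖u x‖ = 1 := hnorm x hx
      calc ‖fderiv ℝ u x v‖ ^ 2 = -⟪u x, (fderiv ℝ (fderiv ℝ u) x v) v⟫_ℝ := h1
        _ ≤ ‖u x‖ * ‖(fderiv ℝ (fderiv ℝ u) x v) v‖ := h2
        _ = ‖(fderiv ℝ (fderiv ℝ u) x v) v‖ := by rw [hux, one_mul]
        _ ≤ ‖fderiv ℝ (fderiv ℝ u) x‖ * ‖v‖ ^ 2 := h3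
    -- deduce the operator-norm bound
    have hM : (0 : ℝ) ≤ ‖fderiv ℝ (fderiv ℝ u) x‖ := ContinuousLinearMap.opNorm_nonneg _
    have hop : ‖fderiv ℝ u x‖ ≤ Real.sqrt ‖fderiv ℝ (fderiv ℝ u) x‖ := by
      refine ContinuousLinearMap.opNorm_le_bound _ (Real.sqrt_nonneg _) fun v => ?_
      have h := hbound v
      have h' : ‖fderiv ℝ u x v‖ ^ 2 ≤ (Real.sqrt ‖fderiv ℝ (fderiv ℝ u) x‖ * ‖v‖) ^ 2 := by
        rw [mul_pow, Real.sq_sqrt hM]; exact h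
      calc ‖fderiv ℝ u x v‖ = Real.sqrt (‖fderiv ℝ u x v‖ ^ 2) :=
            (Real.sqrt_sq (norm_nonneg _)).symm
        _ ≤ Real.sqrt ((Real.sqrt ‖fderiv ℝ (fderiv ℝ u) x‖ * ‖v‖) ^ 2) :=
            Real.sqrt_le_sqrt h'
        _ = Real.sqrt ‖fderiv ℝ (fderiv ℝ u) x‖ * ‖v‖ :=
            Real.sqrt_sq (mul_nonneg (Real.sqrt_nonneg _) (norm_nonneg _))
    nlinarith [hop, norm_nonneg (fderiv ℝ u x), Real.sq_sqrt hM,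
      Real.sqrt_nonneg ‖fderiv ℝ (fderiv ℝ u) x‖]
  -- pointwise fourth-power bound
  have key4 : ∀ x ∈ ball (0 : E 5) 1, ‖fderiv ℝ u x‖ ^ 4 ≤ ‖fderiv ℝ (fderiv ℝ u) x‖ ^ 2 := by
    intro x hx
    have hxU : x ∈ U := hUB (ball_subset_closedBall hx)
    have h := key x hxU
    have h0 : (0 : ℝ) ≤ ‖fderiv ℝ u x‖ ^ 2 := sq_nonneg _
    calc ‖fderiv ℝ u x‖ ^ 4 = (‖fderiv ℝ u x‖ ^ 2) ^ 2 := by ring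
      _ ≤ ‖fderiv ℝ (fderiv ℝ u) x‖ ^ 2 := by nlinarith
  -- integrability
  have hcont1 : ContinuousOn (fun x => ‖fderiv ℝ u x‖ ^ 4) U := by
    have := hu.continuousOn_fderiv_of_isOpen hU (by simp)
    exact (this.norm.pow 4)
  have hcont2 : ContinuousOn (fun x => ‖fderiv ℝ (fderiv ℝ u) x‖ ^ 2) U := by
    have h1 : ContDiffOn ℝ (⊤ : ℕ∞) (fderiv ℝ u) U := hu.fderiv_of_isOpen hU (by simp)
    have := h1.continuousOn_fderiv_of_isOpen hU (by simp)
    exact (this.norm.pow 2)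
  have hint1 : IntegrableOn (fun x => ‖fderiv ℝ u x‖ ^ 4) (ball (0 : E 5) 1) volume := by
    have := (hcont1.mono hUB).integrableOn_compact (μ := volume) (isCompact_closedBall 0 1)
    exact this.mono_set ball_subset_closedBall
  have hint2 : IntegrableOn (fun x => ‖fderiv ℝ (fderiv ℝ u) x‖ ^ 2)
      (ball (0 : E 5) 1) volume := by
    have := (hcont2.mono hUB).integrableOn_compact (μ := volume) (isCompact_closedBall 0 1)
    exact this.mono_set ball_subset_closedBall
  have hmono : ∫ x in ball (0 : E 5) 1, ‖fderiv ℝ u x‖ ^ 4 ≤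
      ∫ x in ball (0 : E 5) 1, ‖fderiv ℝ (fderiv ℝ u) x‖ ^ 2 :=
    setIntegral_mono_on hint1 hint2 measurableSet_ball key4
  have hnn : (0 : ℝ) ≤ ∫ x in ball (0 : E 5) 1, ‖fderiv ℝ (fderiv ℝ u) x‖ ^ 2 :=
    setIntegral_nonneg measurableSet_ball fun x _ => sq_nonneg _
  linarith

end
end

section
/- For every finite set A ⊂ B^5 there exists a minimal Z₂ connection for A; moreover, a minimal Z₂ connection can be chosen to consist of finitely many pairwise disjoint closed straight line segments, each of which either joins two distinct points of A by a segment contained in B^5, or joins a point a ∈ A to a point of ∂B^5 by a segment lying on a radius of B^5 (and hence meeting ∂B^5 orthogonally). -/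
open MeasureTheory Metric Set
open scoped ENNReal

noncomputable section

def e0 : E 5 := EuclideanSpace.single 0 1

lemma norm_e0 : ‖e0‖ = 1 := by
  simp [e0, EuclideanSpace.norm_single]

open Classical in
/-- canonical sphere point on the ray of `a` -/
def rad (a : E 5) : E 5 := if a = 0 then e0 else ‖a‖⁻¹ • a

lemma norm_rad (a : E 5) : ‖rad a‖ = 1 := by
  unfold rad
  split_ifs with h
  · exact norm_e0
  · rw [norm_smul, norm_inv, norm_norm, inv_mul_cancel₀ (norm_ne_zero_iff.mpr h)]

lemma smul_rad (a : E 5) : ‖a‖ • rad a = a := by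
  unfold rad
  split_ifs with h
  · simp [h]
  · rw [smul_smul, mul_inv_cancel₀ (norm_ne_zero_iff.mpr h), one_smul]

lemma rad_mem_sphere (a : E 5) : rad a ∈ sphere (0 : E 5) 1 := by
  simp [mem_sphere_zero_iff_norm, norm_rad]

lemma dist_smul_unit {u : E 5} (hu : ‖u‖ = 1) (s t : ℝ) :
    dist (s • u) (t • u) = |s - t| := by
  rw [dist_eq_norm, ← sub_smul, norm_smul, hu, mul_one, Real.norm_eq_abs]

lemma dist_rad (a : E 5) (ha : ‖a‖ ≤ 1) : dist a (rad a) = 1 - ‖a‖ := by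
  have h1 : dist (‖a‖ • rad a) ((1:ℝ) • rad a) = |‖a‖ - 1| := dist_smul_unit (norm_rad a) _ _
  rw [smul_rad, one_smul] at h1
  rw [h1, abs_of_nonpos (by linarith)]
  ring






/-- `Γ` is an embedded arc of finite length with endpoints `a`, `b`. -/
def IsArc (Γ : Set (E 5)) (a b : E 5) : Prop :=
  ∃ γ : ℝ → E 5, ContinuousOn γ (Icc 0 1) ∧ InjOn γ (Icc 0 1) ∧
    γ '' Icc 0 1 = Γ ∧ γ 0 = a ∧ γ 1 = b ∧ μH[1] Γ < ⊤

lemma isArc_segment {a b : E 5} (h : a ≠ b) : IsArc (segment ℝ a b) a b := by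
  refine ⟨fun t => a + t • (b - a), ?_, ?_, ?_, by simp, by simp, ?_⟩
  · exact (continuous_const.add (continuous_id.smul continuous_const)).continuousOn
  · intro s hs t ht hst
    have hba : b - a ≠ 0 := sub_ne_zero.mpr h.symm
    have : (s - t) • (b - a) = 0 := by
      have hst' : s • (b - a) = t • (b - a) := by
        simpa using congrArg (fun x => x - a) hst
      rw [sub_smul, hst', sub_self]
    rcases smul_eq_zero.mp this with h1 | h1
    · linarith [sub_eq_zero.mp (by exact_mod_cast h1)]
    · exact absurd h1 hba
  · exact (segment_eq_image' ℝ a b).symm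
  · rw [hausdorffMeasure_segment]; exact edist_lt_top a b

lemma isArc_ne {Γ : Set (E 5)} {a b : E 5} (h : IsArc Γ a b) : a ≠ b := by
  obtain ⟨γ, _, hinj, _, h0, h1, _⟩ := h
  intro hab
  have : (0:ℝ) = 1 := hinj (by norm_num) (by norm_num) (by rw [h0, h1, hab])
  norm_num at this

lemma isArc_compact {Γ : Set (E 5)} {a b : E 5} (h : IsArc Γ a b) : IsCompact Γ := by
  obtain ⟨γ, hc, _, him, _, _, _⟩ := h
  rw [← him]
  exact isCompact_Icc.image_of_continuousOn hc

lemma isArc_mem_left {Γ : Set (E 5)} {a b : E 5} (h : IsArc Γ a b) : a ∈ Γ := by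
  obtain ⟨γ, _, _, him, h0, _, _⟩ := h
  rw [← him, ← h0]; exact mem_image_of_mem _ (by norm_num)

lemma isArc_mem_right {Γ : Set (E 5)} {a b : E 5} (h : IsArc Γ a b) : b ∈ Γ := by
  obtain ⟨γ, _, _, him, _, h1, _⟩ := h
  rw [← him, ← h1]; exact mem_image_of_mem _ (by norm_num)

lemma isArc_lower {Γ : Set (E 5)} {a b : E 5} (h : IsArc Γ a b) :
    edist a b ≤ μH[1] Γ := by
  obtain ⟨γ, hc, hinj, him, h0, h1, hfin⟩ := h
  set f : E 5 → ℝ := fun x => dist x a with hf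
  have hlip : LipschitzWith 1 f := LipschitzWith.dist_left a
  have hsub : Icc (0:ℝ) (dist b a) ⊆ f '' Γ := by
    have hcont : ContinuousOn (f ∘ γ) (Icc 0 1) :=
      hlip.continuous.comp_continuousOn hc
    have := intermediate_value_Icc (by norm_num : (0:ℝ) ≤ 1) hcont
    rw [Function.comp_apply, Function.comp_apply, h0, h1] at this
    simp only [hf, dist_self] at this
    rw [← him, ← image_comp]
    exact this
  have h2 : μH[1] (f '' Γ) ≤ μH[1] Γ := by
    have h := hlip.hausdorffMeasure_image_le (zero_le_one : (0:ℝ) ≤ 1) Γ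
    simpa using h
  have h3 : ENNReal.ofReal (dist b a) ≤ μH[1] (f '' Γ) := by
    calc ENNReal.ofReal (dist b a) = volume (Icc (0:ℝ) (dist b a)) := by
          rw [Real.volume_Icc, sub_zero]
      _ = μH[1] (Icc (0:ℝ) (dist b a)) := by rw [MeasureTheory.hausdorffMeasure_real]
      _ ≤ μH[1] (f '' Γ) := measure_mono hsub
  rw [edist_dist, dist_comm]
  exact h3.trans h2


lemma seg_of_dist {a b c : E 5} (h : dist a b + dist b c = dist a c) :
    b ∈ segment ℝ a c := by
  rw [mem_segment_iff_wbtw]; exact dist_add_dist_eq_iff.mp h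

lemma smul_u_inj {u : E 5} (hu : u ≠ 0) {s t : ℝ} (h : s • u = t • u) : s = t := by
  by_contra hne
  have : (s - t) • u = 0 := by rw [sub_smul, h, sub_self]
  rcases smul_eq_zero.mp this with h1 | h1
  · exact hne (by linarith [sub_eq_zero.mp h1])
  · exact hu h1

lemma seg_vec {a b x : E 5} (h : x ∈ segment ℝ a b) (hxa : x ≠ a) (hxb : x ≠ b) :
    ∃ β : ℝ, 0 < β ∧ b - x = β • (x - a) := by
  obtain ⟨u, v, hu, hv, huv, hx⟩ := h
  have hv0 : v ≠ 0 := by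
    rintro rfl
    have hu1 : u = 1 := by linarith
    rw [hu1, zero_smul, add_zero, one_smul] at hx
    exact hxa hx.symm
  have hu0 : u ≠ 0 := by
    rintro rfl
    have hv1 : v = 1 := by linarith
    rw [hv1, zero_smul, zero_add, one_smul] at hx
    exact hxb hx.symm
  refine ⟨u / v, div_pos (lt_of_le_of_ne hu (Ne.symm hu0)) (lt_of_le_of_ne hv (Ne.symm hv0)), ?_⟩
  have hu1 : u = 1 - v := by linarith
  have h1 : b - x = u • (b - a) := by rw [← hx, hu1]; module
  have h2 : x - a = v • (b - a) := by rw [← hx, hu1]; module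
  rw [h1, h2, smul_smul, div_mul_cancel₀ _ hv0]

lemma three_between {a b c x : E 5} (h1 : x ∈ segment ℝ a b) (h2 : x ∈ segment ℝ a c)
    (h3 : x ∈ segment ℝ b c) (hxa : x ≠ a) (hxb : x ≠ b) (hxc : x ≠ c) : False := by
  obtain ⟨β, hβ, e1⟩ := seg_vec h1 hxa hxb
  obtain ⟨γ, hγ, e2⟩ := seg_vec h2 hxa hxc
  obtain ⟨δ, hδ, e3⟩ := seg_vec h3 hxb hxc
  have hxb' : x - b = (-β) • (x - a) := by
    have hh : x - b = -(b - x) := by abel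
    rw [hh, e1]; module
  have key : c - x = (-(δ * β)) • (x - a) := by
    rw [e3, hxb', smul_smul]; ring_nf
  rw [e2] at key
  have hzero : (γ + δ * β) • (x - a) = 0 := by
    have h4 := sub_eq_zero.mpr key
    rw [← sub_smul] at h4
    convert h4 using 2
    ring
  rcases smul_eq_zero.mp hzero with h | h
  · nlinarith
  · exact hxa (sub_eq_zero.mp h)

lemma exchange_pp {p q r s x : E 5} (hpq : p ≠ q) (hrs : r ≠ s) (hpr : p ≠ r)
    (hps : p ≠ s) (hqr : q ≠ r) (hqs : q ≠ s)
    (hx1 : x ∈ segment ℝ p q) (hx2 : x ∈ segment ℝ r s) :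
    dist p r + dist q s < dist p q + dist r s ∨
    dist p s + dist q r < dist p q + dist r s := by
  by_contra hcon
  push_neg at hcon
  obtain ⟨h1, h2⟩ := hcon
  have e1 : dist p x + dist x q = dist p q :=
    dist_add_dist_eq_iff.mpr (mem_segment_iff_wbtw.mp hx1)
  have e2 : dist r x + dist x s = dist r s :=
    dist_add_dist_eq_iff.mpr (mem_segment_iff_wbtw.mp hx2)
  have t1 : dist p r ≤ dist p x + dist x r := dist_triangle p x r
  have t2 : dist q s ≤ dist q x + dist x s := dist_triangle q x s
  have t3 : dist p s ≤ dist p x + dist x s := dist_triangle p x s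
  have t4 : dist q r ≤ dist q x + dist x r := dist_triangle q x r
  have c1 : dist x q = dist q x := dist_comm x q
  have c2 : dist x r = dist r x := dist_comm x r
  have q1 : dist p x + dist x r = dist p r := by linarith
  have q2 : dist q x + dist x s = dist q s := by linarith
  have q3 : dist p x + dist x s = dist p s := by linarith
  have q4 : dist q x + dist x r = dist q r := by linarith
  have spr : x ∈ segment ℝ p r := seg_of_dist q1
  have sqs : x ∈ segment ℝ q s := seg_of_dist q2
  have sps : x ∈ segment ℝ p s := seg_of_dist q3
  have sqr : x ∈ segment ℝ q r := seg_of_dist q4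
  by_cases hxp : x = p
  · subst hxp
    exact three_between sqr sqs hx2 hpq hpr hps
  · by_cases hxq : x = q
    · subst hxq
      exact three_between spr sps hx2 (Ne.symm hpq) hqr hqs
    · by_cases hxr : x = r
      · subst hxr
        exact three_between hx1 sps sqs (Ne.symm hpr) (Ne.symm hqr) hrs
      · exact three_between hx1 spr sqr hxp hxq hxr

section Chunk4

lemma mem_radial_seg {a x : E 5} (ha : ‖a‖ ≤ 1) (hx : x ∈ segment ℝ a (rad a)) :
    ∃ m : ℝ, ‖a‖ ≤ m ∧ m ≤ 1 ∧ x = m • rad a := by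
  obtain ⟨u, v, hu, hv, huv, hxe⟩ := hx
  refine ⟨u * ‖a‖ + v, ?_, ?_, ?_⟩
  · nlinarith [mul_le_mul_of_nonneg_left ha hv]
  · nlinarith [mul_le_mul_of_nonneg_left ha hu]
  · rw [← hxe, add_smul, mul_smul, smul_rad]

lemma norm_smul_rad {a : E 5} {m : ℝ} (hm : 0 ≤ m) : ‖m • rad a‖ = m := by
  rw [norm_smul, norm_rad, mul_one, Real.norm_eq_abs, abs_of_nonneg hm]

lemma rad_ne_zero (a : E 5) : rad a ≠ 0 := by
  intro h
  have := norm_rad a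
  rw [h, norm_zero] at this
  norm_num at this

lemma seg_coord {u : E 5} (hu : u ≠ 0) {s t r : ℝ}
    (h : t • u ∈ segment ℝ (s • u) (r • u)) : min s r ≤ t ∧ t ≤ max s r := by
  obtain ⟨c1, c2, hc1, hc2, hc12, hx⟩ := h
  have hx' : (c1 * s + c2 * r) • u = t • u := by
    rw [← hx, add_smul, mul_smul, mul_smul]
  have ht : t = c1 * s + c2 * r := (smul_u_inj hu hx').symm
  have hmin : c1 * (min s r) + c2 * (min s r) = min s r := by
    rw [← add_mul, hc12, one_mul]
  have hmax : c1 * (max s r) + c2 * (max s r) = max s r := by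
    rw [← add_mul, hc12, one_mul]
  constructor
  · nlinarith [mul_le_mul_of_nonneg_left (min_le_left s r) hc1,
      mul_le_mul_of_nonneg_left (min_le_right s r) hc2]
  · nlinarith [mul_le_mul_of_nonneg_left (le_max_left s r) hc1,
      mul_le_mul_of_nonneg_left (le_max_right s r) hc2]

lemma exchange_rr {a b x : E 5} (ha : ‖a‖ < 1) (hb : ‖b‖ < 1) (hab : a ≠ b)
    (hx1 : x ∈ segment ℝ a (rad a)) (hx2 : x ∈ segment ℝ b (rad b)) :
    dist a b < dist a (rad a) + dist b (rad b) := by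
  rw [dist_rad a ha.le, dist_rad b hb.le]
  obtain ⟨m, hm1, hm2, hxm⟩ := mem_radial_seg ha.le hx1
  obtain ⟨m', hm1', hm2', hxm'⟩ := mem_radial_seg hb.le hx2
  have hm0 : 0 ≤ m := (norm_nonneg a).trans hm1
  have hm0' : 0 ≤ m' := (norm_nonneg b).trans hm1'
  have hxn : ‖x‖ = m := by rw [hxm]; exact norm_smul_rad hm0
  have hxn' : ‖x‖ = m' := by rw [hxm']; exact norm_smul_rad hm0'
  have hmm : m' = m := by rw [← hxn, ← hxn']
  have dax : dist a x = m - ‖a‖ := by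
    have := dist_smul_unit (norm_rad a) ‖a‖ m
    rw [smul_rad, ← hxm] at this
    rw [this, abs_of_nonpos (by linarith)]; ring
  have dbx : dist b x = m - ‖b‖ := by
    have := dist_smul_unit (norm_rad b) ‖b‖ m'
    rw [smul_rad, ← hxm'] at this
    rw [this, hmm, abs_of_nonpos (by linarith)]; ring
  have tri : dist a b ≤ dist a x + dist x b := dist_triangle a x b
  rw [dist_comm x b] at tri
  by_contra hcon
  push_neg at hcon
  have hm1eq : m = 1 := by linarith
  have heq : dist a x + dist x b = dist a b := by
    rw [dist_comm x b]; linarith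
  have hxseg : x ∈ segment ℝ a b := seg_of_dist heq
  have : ‖x‖ < 1 := by
    have hball : segment ℝ a b ⊆ ball (0 : E 5) 1 :=
      (convex_ball (0 : E 5) 1).segment_subset
        (mem_ball_zero_iff.mpr ha) (mem_ball_zero_iff.mpr hb)
    exact mem_ball_zero_iff.mp (hball hxseg)
  rw [hxn, hm1eq] at this
  norm_num at this

lemma exchange_pr {p q a x : E 5} (hp : ‖p‖ < 1) (hq : ‖q‖ < 1) (ha : ‖a‖ < 1)
    (hpq : p ≠ q) (hpa : p ≠ a) (hqa : q ≠ a)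
    (hx1 : x ∈ segment ℝ p q) (hx2 : x ∈ segment ℝ a (rad a)) :
    dist p a + dist q (rad q) < dist p q + dist a (rad a) ∨
    dist q a + dist p (rad p) < dist p q + dist a (rad a) := by
  rw [dist_rad p hp.le, dist_rad q hq.le, dist_rad a ha.le]
  obtain ⟨m, hm1, hm2, hxm⟩ := mem_radial_seg ha.le hx2
  have hm0 : 0 ≤ m := (norm_nonneg a).trans hm1
  have hxn : ‖x‖ = m := by rw [hxm]; exact norm_smul_rad hm0
  have dxa : dist x a = m - ‖a‖ := by
    have := dist_smul_unit (norm_rad a) m ‖a‖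
    rw [smul_rad, ← hxm] at this
    rw [this, abs_of_nonneg (by linarith)]
  by_contra hcon
  push_neg at hcon
  obtain ⟨h1, h2⟩ := hcon
  have e1 : dist p x + dist x q = dist p q :=
    dist_add_dist_eq_iff.mpr (mem_segment_iff_wbtw.mp hx1)
  have tpa : dist p a ≤ dist p x + dist x a := dist_triangle p x a
  have tqa : dist q a ≤ dist q x + dist x a := dist_triangle q x a
  have cq : dist x q = dist q x := dist_comm x q
  have nq : m - dist x q ≤ ‖q‖ := by
    have : ‖x‖ - ‖q‖ ≤ ‖x - q‖ := norm_sub_norm_le x q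
    rw [← dist_eq_norm] at this
    linarith [hxn ▸ this]
  have np : m - dist p x ≤ ‖p‖ := by
    have : ‖x‖ - ‖p‖ ≤ ‖x - p‖ := norm_sub_norm_le x p
    rw [← dist_eq_norm] at this
    rw [dist_comm x p] at this
    linarith [hxn ▸ this]
  -- equalities from ¬alt1
  have q1 : dist p x + dist x a = dist p a := by linarith
  have q2 : ‖q‖ = m - dist x q := by linarith
  -- equalities from ¬alt2
  have q3 : dist q x + dist x a = dist q a := by linarith
  have q4 : ‖p‖ = m - dist p x := by linarith
  -- x between p and a, q and a
  have spa : x ∈ segment ℝ p a := seg_of_dist q1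
  have sqa : x ∈ segment ℝ q a := seg_of_dist q3
  -- q ∈ segment 0 x, p ∈ segment 0 x
  have sq0 : q ∈ segment ℝ (0 : E 5) x := by
    apply seg_of_dist
    simp only [dist_zero_left]
    rw [hxn, dist_comm q x]
    linarith
  have sp0 : p ∈ segment ℝ (0 : E 5) x := by
    apply seg_of_dist
    simp only [dist_zero_left]
    rw [hxn, dist_comm p x]
    linarith [dist_comm x p, q4]
  -- coordinates along u = rad a
  set u := rad a with hu
  have hune : u ≠ 0 := rad_ne_zero a
  obtain ⟨c1, c2, hc1, hc2, hc12, hqe⟩ := sq0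
  have hqQ : q = (c2 * m) • u := by rw [← hqe, hxm, smul_zero, zero_add, smul_smul]
  obtain ⟨d1, d2, hd1, hd2, hd12, hpe⟩ := sp0
  have hpP : p = (d2 * m) • u := by rw [← hpe, hxm, smul_zero, zero_add, smul_smul]
  set Q := c2 * m with hQdef
  set P := d2 * m with hPdef
  have hQm : Q ≤ m := by nlinarith
  have hPm : P ≤ m := by nlinarith
  have hae : a = ‖a‖ • u := (smul_rad a).symm
  -- x ∈ segment p a : coordinates
  have cpa : min P ‖a‖ ≤ m ∧ m ≤ max P ‖a‖ := by
    apply seg_coord hune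
    rw [← hxm, ← hpP, ← hae]; exact spa
  have cqa : min Q ‖a‖ ≤ m ∧ m ≤ max Q ‖a‖ := by
    apply seg_coord hune
    rw [← hxm, ← hqQ, ← hae]; exact sqa
  have hPa : m = P ∨ m = ‖a‖ := by
    rcases max_cases P ‖a‖ with ⟨hmx, _⟩ | ⟨hmx, _⟩
    · left; linarith [cpa.2, hmx ▸ cpa.2]
    · right; linarith [cpa.2, hmx ▸ cpa.2]
  have hQa : m = Q ∨ m = ‖a‖ := by
    rcases max_cases Q ‖a‖ with ⟨hmx, _⟩ | ⟨hmx, _⟩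
    · left; linarith [hmx ▸ cqa.2]
    · right; linarith [hmx ▸ cqa.2]
  have hma : m = ‖a‖ → False := by
    intro hmaeq
    have hxa : x = a := by
      rw [hxm, hmaeq]
      exact smul_rad a
    -- a ∈ segment p q, coordinates
    have : min P Q ≤ m ∧ m ≤ max P Q := by
      apply seg_coord hune
      rw [← hxm, ← hpP, ← hqQ]
      exact hx1
    rcases max_cases P Q with ⟨hmx, _⟩ | ⟨hmx, _⟩
    · have : m = P := by linarith [hmx ▸ this.2]
      exact hpa (by rw [hpP, ← this, ← hxm, hxa])
    · have : m = Q := by linarith [hmx ▸ this.2]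
      exact hqa (by rw [hqQ, ← this, ← hxm, hxa])
  rcases hPa with hP | hP
  · rcases hQa with hQ | hQ
    · exact hpq (by rw [hpP, hqQ, ← hP, ← hQ])
    · exact hma hQ
  · exact hma hP

end Chunk4

section Chunk5
open scoped Classical

def inB (t : E 5) (z : E 5 × E 5) : Prop := t = z.1 ∨ t = z.2

def BlockTy (A : Finset (E 5)) (z : E 5 × E 5) : Prop :=
  (z.1 ∈ A ∧ z.2 ∈ A ∧ z.1 ≠ z.2) ∨ (z.1 ∈ A ∧ z.2 = rad z.1)

def Blocks (A : Finset (E 5)) (L : Finset (E 5 × E 5)) : Prop :=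
  (∀ z ∈ L, BlockTy A z) ∧ (∀ p ∈ A, ∃! z, z ∈ L ∧ inB p z)

def cost (L : Finset (E 5 × E 5)) : ℝ := ∑ z ∈ L, dist z.1 z.2

lemma normA {A : Finset (E 5)} (hA : ↑A ⊆ ball (0 : E 5) 1) {t : E 5} (ht : t ∈ A) :
    ‖t‖ < 1 := mem_ball_zero_iff.mp (hA ht)

lemma A_ne_rad {A : Finset (E 5)} (hA : ↑A ⊆ ball (0 : E 5) 1) {t : E 5} (ht : t ∈ A)
    (y : E 5) : t ≠ rad y := by
  intro h
  have := normA hA ht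
  rw [h, norm_rad] at this
  norm_num at this

lemma blockTy_fst {A : Finset (E 5)} {z : E 5 × E 5} (h : BlockTy A z) : z.1 ∈ A := by
  rcases h with ⟨h, _⟩ | ⟨h, _⟩ <;> exact h

lemma blocks_ne {A : Finset (E 5)} {L : Finset (E 5 × E 5)} (hL : Blocks A L)
    {z w : E 5 × E 5} (hz : z ∈ L) (hw : w ∈ L) (hzw : z ≠ w)
    {t : E 5} (ht : t ∈ A) (h1 : inB t z) (h2 : inB t w) : False := by
  obtain ⟨u, _, hu⟩ := hL.2 t ht
  exact hzw ((hu z ⟨hz, h1⟩).trans (hu w ⟨hw, h2⟩).symm)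

lemma blocks_replace2 {A : Finset (E 5)} {L : Finset (E 5 × E 5)} (hL : Blocks A L)
    {z w z' w' : E 5 × E 5} (hz : z ∈ L) (hw : w ∈ L) (hzw : z ≠ w)
    (htz : BlockTy A z') (htw : BlockTy A w')
    (hcov : ∀ t ∈ A, (inB t z' ∨ inB t w') ↔ (inB t z ∨ inB t w))
    (hdisj : ∀ t ∈ A, ¬(inB t z' ∧ inB t w')) :
    ∃ L', Blocks A L' ∧
      cost L' = dist z'.1 z'.2 + dist w'.1 w'.2 + (cost L - dist z.1 z.2 - dist w.1 w.2) := by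
  set rest := (L.erase z).erase w with hrest
  have hmem_rest : ∀ v, v ∈ rest ↔ v ∈ L ∧ v ≠ z ∧ v ≠ w := by
    intro v
    simp only [hrest, Finset.mem_erase]
    tauto
  have hz'A : z'.1 ∈ A := blockTy_fst htz
  have hw'A : w'.1 ∈ A := blockTy_fst htw
  have hz'w' : z' ≠ w' := by
    intro h
    exact hdisj z'.1 hz'A ⟨Or.inl rfl, h ▸ Or.inl rfl⟩
  have hold : ∀ v ∈ L, ∀ t ∈ A, inB t v → (inB t z ∨ inB t w) → v = z ∨ v = w := by
    intro v hv t ht hup hzw'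
    obtain ⟨u, _, hu⟩ := hL.2 t ht
    have huv : v = u := hu v ⟨hv, hup⟩
    rcases hzw' with h | h
    · exact Or.inl (huv.trans (hu z ⟨hz, h⟩).symm)
    · exact Or.inr (huv.trans (hu w ⟨hw, h⟩).symm)
  have hz'rest : z' ∉ rest := by
    intro h
    rw [hmem_rest] at h
    rcases hold z' h.1 z'.1 hz'A (Or.inl rfl) ((hcov z'.1 hz'A).mp (Or.inl (Or.inl rfl))) with
      h' | h'
    · exact h.2.1 h'
    · exact h.2.2 h'
  have hw'rest : w' ∉ rest := by
    intro h
    rw [hmem_rest] at h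
    rcases hold w' h.1 w'.1 hw'A (Or.inl rfl) ((hcov w'.1 hw'A).mp (Or.inr (Or.inl rfl))) with
      h' | h'
    · exact h.2.1 h'
    · exact h.2.2 h'
  refine ⟨insert z' (insert w' rest), ⟨?_, ?_⟩, ?_⟩
  · intro v hv
    rcases Finset.mem_insert.mp hv with rfl | hv
    · exact htz
    rcases Finset.mem_insert.mp hv with rfl | hv
    · exact htw
    · exact hL.1 v ((hmem_rest v).mp hv).1
  · intro t ht
    obtain ⟨u, ⟨huL, hut⟩, huniq⟩ := hL.2 t ht
    by_cases hcase : inB t z ∨ inB t w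
    · rcases (hcov t ht).mpr hcase with hnew | hnew
      · refine ⟨z', ⟨Finset.mem_insert_self _ _, hnew⟩, ?_⟩
        rintro v ⟨hv, hvt⟩
        rcases Finset.mem_insert.mp hv with rfl | hv
        · rfl
        rcases Finset.mem_insert.mp hv with rfl | hv
        · exact absurd ⟨hnew, hvt⟩ (hdisj t ht)
        · rw [hmem_rest] at hv
          rcases hold v hv.1 t ht hvt hcase with h' | h'
          · exact absurd h' hv.2.1
          · exact absurd h' hv.2.2
      · refine ⟨w', ⟨Finset.mem_insert_of_mem (Finset.mem_insert_self _ _), hnew⟩, ?_⟩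
        rintro v ⟨hv, hvt⟩
        rcases Finset.mem_insert.mp hv with rfl | hv
        · exact absurd ⟨hvt, hnew⟩ (hdisj t ht)
        rcases Finset.mem_insert.mp hv with rfl | hv
        · rfl
        · rw [hmem_rest] at hv
          rcases hold v hv.1 t ht hvt hcase with h' | h'
          · exact absurd h' hv.2.1
          · exact absurd h' hv.2.2
    · push_neg at hcase
      have huz : u ≠ z := by rintro rfl; exact hcase.1 hut
      have huw : u ≠ w := by rintro rfl; exact hcase.2 hut
      refine ⟨u, ⟨Finset.mem_insert_of_mem (Finset.mem_insert_of_mem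
        ((hmem_rest u).mpr ⟨huL, huz, huw⟩)), hut⟩, ?_⟩
      rintro v ⟨hv, hvt⟩
      rcases Finset.mem_insert.mp hv with rfl | hv
      · exact absurd ((hcov t ht).mp (Or.inl hvt)) (by tauto)
      rcases Finset.mem_insert.mp hv with rfl | hv
      · exact absurd ((hcov t ht).mp (Or.inr hvt)) (by tauto)
      · exact huniq v ⟨((hmem_rest v).mp hv).1, hvt⟩
  · have hwz : w ∈ L.erase z := Finset.mem_erase.mpr ⟨Ne.symm hzw, hw⟩
    have c1 : cost rest = cost L - dist z.1 z.2 - dist w.1 w.2 := by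
      rw [hrest]
      unfold cost
      rw [Finset.sum_erase_eq_sub hwz, Finset.sum_erase_eq_sub hz]
    have hw'i : w' ∉ rest := hw'rest
    have hz'i : z' ∉ insert w' rest := by
      intro h
      rcases Finset.mem_insert.mp h with h | h
      · exact hz'w' h
      · exact hz'rest h
    unfold cost
    rw [Finset.sum_insert hz'i, Finset.sum_insert hw'i]
    unfold cost at c1
    rw [c1]
    ring

lemma blocks_replace1 {A : Finset (E 5)} {L : Finset (E 5 × E 5)} (hL : Blocks A L)
    {z w z' : E 5 × E 5} (hz : z ∈ L) (hw : w ∈ L) (hzw : z ≠ w)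
    (htz : BlockTy A z')
    (hcov : ∀ t ∈ A, inB t z' ↔ (inB t z ∨ inB t w)) :
    ∃ L', Blocks A L' ∧
      cost L' = dist z'.1 z'.2 + (cost L - dist z.1 z.2 - dist w.1 w.2) := by
  set rest := (L.erase z).erase w with hrest
  have hmem_rest : ∀ v, v ∈ rest ↔ v ∈ L ∧ v ≠ z ∧ v ≠ w := by
    intro v
    simp only [hrest, Finset.mem_erase]
    tauto
  have hz'A : z'.1 ∈ A := blockTy_fst htz
  have hold : ∀ v ∈ L, ∀ t ∈ A, inB t v → (inB t z ∨ inB t w) → v = z ∨ v = w := by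
    intro v hv t ht hup hzw'
    obtain ⟨u, _, hu⟩ := hL.2 t ht
    have huv : v = u := hu v ⟨hv, hup⟩
    rcases hzw' with h | h
    · exact Or.inl (huv.trans (hu z ⟨hz, h⟩).symm)
    · exact Or.inr (huv.trans (hu w ⟨hw, h⟩).symm)
  have hz'rest : z' ∉ rest := by
    intro h
    rw [hmem_rest] at h
    rcases hold z' h.1 z'.1 hz'A (Or.inl rfl) ((hcov z'.1 hz'A).mp (Or.inl rfl)) with h' | h'
    · exact h.2.1 h'
    · exact h.2.2 h'
  refine ⟨insert z' rest, ⟨?_, ?_⟩, ?_⟩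
  · intro v hv
    rcases Finset.mem_insert.mp hv with rfl | hv
    · exact htz
    · exact hL.1 v ((hmem_rest v).mp hv).1
  · intro t ht
    obtain ⟨u, ⟨huL, hut⟩, huniq⟩ := hL.2 t ht
    by_cases hcase : inB t z ∨ inB t w
    · refine ⟨z', ⟨Finset.mem_insert_self _ _, (hcov t ht).mpr hcase⟩, ?_⟩
      rintro v ⟨hv, hvt⟩
      rcases Finset.mem_insert.mp hv with rfl | hv
      · rfl
      · rw [hmem_rest] at hv
        rcases hold v hv.1 t ht hvt hcase with h' | h'
        · exact absurd h' hv.2.1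
        · exact absurd h' hv.2.2
    · push_neg at hcase
      have huz : u ≠ z := by rintro rfl; exact hcase.1 hut
      have huw : u ≠ w := by rintro rfl; exact hcase.2 hut
      refine ⟨u, ⟨Finset.mem_insert_of_mem ((hmem_rest u).mpr ⟨huL, huz, huw⟩), hut⟩, ?_⟩
      rintro v ⟨hv, hvt⟩
      rcases Finset.mem_insert.mp hv with rfl | hv
      · exact absurd ((hcov t ht).mp hvt) (by tauto)
      · exact huniq v ⟨((hmem_rest v).mp hv).1, hvt⟩
  · have hwz : w ∈ L.erase z := Finset.mem_erase.mpr ⟨Ne.symm hzw, hw⟩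
    have c1 : cost rest = cost L - dist z.1 z.2 - dist w.1 w.2 := by
      rw [hrest]
      unfold cost
      rw [Finset.sum_erase_eq_sub hwz, Finset.sum_erase_eq_sub hz]
    unfold cost
    rw [Finset.sum_insert hz'rest]
    unfold cost at c1
    rw [c1]

end Chunk5

section Chunk6
open scoped Classical

lemma blocks_nonempty {A : Finset (E 5)} (hA : ↑A ⊆ ball (0 : E 5) 1) :
    Blocks A (A.image (fun p => (p, rad p))) := by
  constructor
  · intro z hz
    obtain ⟨p, hp, rfl⟩ := Finset.mem_image.mp hz
    exact Or.inr ⟨hp, rfl⟩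
  · intro p hp
    refine ⟨(p, rad p), ⟨Finset.mem_image_of_mem _ hp, Or.inl rfl⟩, ?_⟩
    rintro v ⟨hv, hvt⟩
    obtain ⟨q, hq, rfl⟩ := Finset.mem_image.mp hv
    rcases hvt with h | h
    · rw [h]
    · exact absurd h (A_ne_rad hA hp q)

lemma blocks_subset {A : Finset (E 5)} {L : Finset (E 5 × E 5)} (hL : Blocks A L) :
    L ⊆ (A ∪ A.image rad) ×ˢ (A ∪ A.image rad) := by
  intro z hz
  rcases hL.1 z hz with ⟨h1, h2, _⟩ | ⟨h1, h2⟩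
  · exact Finset.mem_product.mpr ⟨Finset.mem_union_left _ h1, Finset.mem_union_left _ h2⟩
  · refine Finset.mem_product.mpr ⟨Finset.mem_union_left _ h1, Finset.mem_union_right _ ?_⟩
    rw [h2]
    exact Finset.mem_image_of_mem _ h1

lemma exists_min_blocks {A : Finset (E 5)} (hA : ↑A ⊆ ball (0 : E 5) 1) :
    ∃ L, Blocks A L ∧ ∀ L', Blocks A L' → cost L ≤ cost L' := by
  have hfin : {L : Finset (E 5 × E 5) | Blocks A L}.Finite := by
    apply Set.Finite.subset
      (Finset.finite_toSet ((A ∪ A.image rad) ×ˢ (A ∪ A.image rad)).powerset)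
    intro L hL
    exact Finset.mem_coe.mpr (Finset.mem_powerset.mpr (blocks_subset hL))
  obtain ⟨L, hL, hmin⟩ := Set.exists_min_image _ cost hfin
    ⟨_, blocks_nonempty hA⟩
  exact ⟨L, hL, hmin⟩

lemma min_disjoint {A : Finset (E 5)} {L : Finset (E 5 × E 5)}
    (hA : ↑A ⊆ ball (0 : E 5) 1) (hL : Blocks A L)
    (hmin : ∀ L', Blocks A L' → cost L ≤ cost L')
    {z w : E 5 × E 5} (hz : z ∈ L) (hw : w ∈ L) (hzw : z ≠ w) :
    Disjoint (segment ℝ z.1 z.2) (segment ℝ w.1 w.2) := by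
  rw [Set.disjoint_left]
  intro x hxz hxw
  have hz1A : z.1 ∈ A := blockTy_fst (hL.1 z hz)
  have hw1A : w.1 ∈ A := blockTy_fst (hL.1 w hw)
  have h11 : z.1 ≠ w.1 := fun h =>
    blocks_ne hL hz hw hzw hz1A (Or.inl rfl) (Or.inl h)
  have h12 : z.1 ≠ w.2 := fun h =>
    blocks_ne hL hz hw hzw hz1A (Or.inl rfl) (Or.inr h)
  rcases hL.1 z hz with hzP | hzR
  · -- z is a pair block
    have hz2A : z.2 ∈ A := hzP.2.1
    have h21 : z.2 ≠ w.1 := fun h =>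
      blocks_ne hL hz hw hzw hz2A (Or.inr rfl) (Or.inl h)
    have h22 : z.2 ≠ w.2 := fun h =>
      blocks_ne hL hz hw hzw hz2A (Or.inr rfl) (Or.inr h)
    rcases hL.1 w hw with hwP | hwR
    · -- pair / pair
      rcases exchange_pp hzP.2.2 hwP.2.2 h11 h12 h21 h22 hxz hxw with halt | halt
      · obtain ⟨L', hL', hc⟩ := blocks_replace2 hL hz hw hzw
          (z' := (z.1, w.1)) (w' := (z.2, w.2))
          (Or.inl ⟨hz1A, hw1A, h11⟩) (Or.inl ⟨hz2A, hwP.2.1, h22⟩)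
          (by intro t ht; simp only [inB]; tauto)
          (by
            intro t ht h
            simp only [inB] at h
            rcases h.1 with h1 | h1 <;> rcases h.2 with h2 | h2
            · exact hzP.2.2 (h1.symm.trans h2)
            · exact h12 (h1.symm.trans h2)
            · exact h21 (h2.symm.trans h1)
            · exact hwP.2.2 (h1.symm.trans h2))
        have hle := hmin L' hL'
        rw [hc] at hle
        simp only at hle halt
        linarith
      · obtain ⟨L', hL', hc⟩ := blocks_replace2 hL hz hw hzw
          (z' := (z.1, w.2)) (w' := (z.2, w.1))
          (Or.inl ⟨hz1A, hwP.2.1, h12⟩) (Or.inl ⟨hz2A, hw1A, h21⟩)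
          (by intro t ht; simp only [inB]; tauto)
          (by
            intro t ht h
            simp only [inB] at h
            rcases h.1 with h1 | h1 <;> rcases h.2 with h2 | h2
            · exact hzP.2.2 (h1.symm.trans h2)
            · exact h11 (h1.symm.trans h2)
            · exact h22 (h2.symm.trans h1)
            · exact hwP.2.2 (h2.symm.trans h1))
        have hle := hmin L' hL'
        rw [hc] at hle
        simp only at hle halt
        linarith
    · -- pair / radial
      rw [hwR.2] at hxw
      have hnz2 : ∀ t ∈ A, t ≠ rad z.2 := fun t ht => A_ne_rad hA ht z.2
      have hnz1 : ∀ t ∈ A, t ≠ rad z.1 := fun t ht => A_ne_rad hA ht z.1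
      have hnw : ∀ t ∈ A, t ≠ w.2 := fun t ht => hwR.2 ▸ A_ne_rad hA ht w.1
      have hdw : dist w.1 w.2 = dist w.1 (rad w.1) := by rw [hwR.2]
      rcases exchange_pr (normA hA hz1A) (normA hA hz2A) (normA hA hw1A)
        hzP.2.2 h11 h21 hxz hxw with halt | halt
      · obtain ⟨L', hL', hc⟩ := blocks_replace2 hL hz hw hzw
          (z' := (z.1, w.1)) (w' := (z.2, rad z.2))
          (Or.inl ⟨hz1A, hw1A, h11⟩) (Or.inr ⟨hz2A, rfl⟩)
          (by
            intro t ht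
            have e1 := hnz2 t ht
            have e2 := hnw t ht
            simp only [inB]
            constructor
            · rintro ((h | h) | (h | h)) <;> tauto
            · rintro ((h | h) | (h | h)) <;> tauto)
          (by
            intro t ht h
            simp only [inB] at h
            rcases h.1 with h1 | h1 <;> rcases h.2 with h2 | h2
            · exact hzP.2.2 (h1.symm.trans h2)
            · exact hnz2 t ht (h1 ▸ h2)
            · exact h21 (h2.symm.trans h1)
            · exact hnz2 t ht (h1 ▸ h2))
        have hle := hmin L' hL'
        rw [hc] at hle
        simp only at hle halt
        rw [hdw] at hle
        linarith
      · obtain ⟨L', hL', hc⟩ := blocks_replace2 hL hz hw hzw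
          (z' := (z.2, w.1)) (w' := (z.1, rad z.1))
          (Or.inl ⟨hz2A, hw1A, h21⟩) (Or.inr ⟨hz1A, rfl⟩)
          (by
            intro t ht
            have e1 := hnz1 t ht
            have e2 := hnw t ht
            simp only [inB]
            constructor
            · rintro ((h | h) | (h | h)) <;> tauto
            · rintro ((h | h) | (h | h)) <;> tauto)
          (by
            intro t ht h
            simp only [inB] at h
            rcases h.1 with h1 | h1 <;> rcases h.2 with h2 | h2
            · exact hzP.2.2 (h2.symm.trans h1)
            · exact hnz1 t ht (h1 ▸ h2)
            · exact h11 (h2.symm.trans h1)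
            · exact hnz1 t ht (h1 ▸ h2))
        have hle := hmin L' hL'
        rw [hc] at hle
        simp only at hle halt
        rw [hdw] at hle
        linarith
  · -- z is a radial block
    rw [hzR.2] at hxz
    have hdz : dist z.1 z.2 = dist z.1 (rad z.1) := by rw [hzR.2]
    rcases hL.1 w hw with hwP | hwR
    · -- radial / pair
      have hw2A : w.2 ∈ A := hwP.2.1
      have h21' : w.2 ≠ z.1 := fun h =>
        blocks_ne hL hw hz hzw.symm hw2A (Or.inr rfl) (Or.inl h)
      have h11' : w.1 ≠ z.1 := Ne.symm h11
      have hnw1 : ∀ t ∈ A, t ≠ rad w.1 := fun t ht => A_ne_rad hA ht w.1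
      have hnw2 : ∀ t ∈ A, t ≠ rad w.2 := fun t ht => A_ne_rad hA ht w.2
      have hnz : ∀ t ∈ A, t ≠ z.2 := fun t ht => hzR.2 ▸ A_ne_rad hA ht z.1
      rcases exchange_pr (normA hA hw1A) (normA hA hw2A) (normA hA hz1A)
        hwP.2.2 h11' h21' hxw hxz with halt | halt
      · obtain ⟨L', hL', hc⟩ := blocks_replace2 hL hw hz hzw.symm
          (z' := (w.1, z.1)) (w' := (w.2, rad w.2))
          (Or.inl ⟨hw1A, hz1A, h11'⟩) (Or.inr ⟨hw2A, rfl⟩)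
          (by
            intro t ht
            have e1 := hnw2 t ht
            have e2 := hnz t ht
            simp only [inB]
            constructor
            · rintro ((h | h) | (h | h)) <;> tauto
            · rintro ((h | h) | (h | h)) <;> tauto)
          (by
            intro t ht h
            simp only [inB] at h
            rcases h.1 with h1 | h1 <;> rcases h.2 with h2 | h2
            · exact hwP.2.2 (h1.symm.trans h2)
            · exact hnw2 t ht (h1 ▸ h2)
            · exact h21' (h2.symm.trans h1)
            · exact hnw2 t ht (h1 ▸ h2))
        have hle := hmin L' hL'
        rw [hc] at hle
        simp only at hle halt
        rw [hdz] at hle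
        linarith
      · obtain ⟨L', hL', hc⟩ := blocks_replace2 hL hw hz hzw.symm
          (z' := (w.2, z.1)) (w' := (w.1, rad w.1))
          (Or.inl ⟨hw2A, hz1A, h21'⟩) (Or.inr ⟨hw1A, rfl⟩)
          (by
            intro t ht
            have e1 := hnw1 t ht
            have e2 := hnz t ht
            simp only [inB]
            constructor
            · rintro ((h | h) | (h | h)) <;> tauto
            · rintro ((h | h) | (h | h)) <;> tauto)
          (by
            intro t ht h
            simp only [inB] at h
            rcases h.1 with h1 | h1 <;> rcases h.2 with h2 | h2
            · exact hwP.2.2 (h2.symm.trans h1)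
            · exact hnw1 t ht (h1 ▸ h2)
            · exact h11' (h2.symm.trans h1)
            · exact hnw1 t ht (h1 ▸ h2))
        have hle := hmin L' hL'
        rw [hc] at hle
        simp only at hle halt
        rw [hdz] at hle
        linarith
    · -- radial / radial
      rw [hwR.2] at hxw
      have hdw : dist w.1 w.2 = dist w.1 (rad w.1) := by rw [hwR.2]
      have halt := exchange_rr (normA hA hz1A) (normA hA hw1A) h11 hxz hxw
      have hnz : ∀ t ∈ A, t ≠ z.2 := fun t ht => hzR.2 ▸ A_ne_rad hA ht z.1
      have hnw : ∀ t ∈ A, t ≠ w.2 := fun t ht => hwR.2 ▸ A_ne_rad hA ht w.1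
      obtain ⟨L', hL', hc⟩ := blocks_replace1 hL hz hw hzw
        (z' := (z.1, w.1)) (Or.inl ⟨hz1A, hw1A, h11⟩)
        (by
          intro t ht
          have e1 := hnz t ht
          have e2 := hnw t ht
          simp only [inB]
          constructor
          · rintro (h | h) <;> tauto
          · rintro ((h | h) | (h | h)) <;> tauto)
      have hle := hmin L' hL'
      rw [hc] at hle
      simp only at hle halt
      rw [hdz, hdw] at hle
      linarith

end Chunk6


/-- `Γ` is a `ℤ₂` connection for the finite set `A` (relative to `∂B⁵`): a finite
disjoint union of embedded arcs of finite length in the closed ball, whose set of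
endpoints is exactly `A ∪ (Γ ∩ ∂B⁵)`, each point of `A` being an endpoint of exactly
one arc, and each arc joining two points of `A` or a point of `A` to `∂B⁵`. -/
def IsZ2Connection (A : Finset (E 5)) (Γ : Set (E 5)) : Prop :=
  ∃ (n : ℕ) (g : Fin n → Set (E 5)) (a b : Fin n → E 5),
    (∀ i, IsArc (g i) (a i) (b i)) ∧
    (∀ i, g i ⊆ closedBall (0 : E 5) 1) ∧
    (Pairwise fun i j => Disjoint (g i) (g j)) ∧
    Γ = ⋃ i, g i ∧
    (⋃ i, {a i, b i}) = ↑A ∪ (Γ ∩ sphere (0 : E 5) 1) ∧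
    (∀ p ∈ A, ∃! i, p = a i ∨ p = b i) ∧
    (∀ i, (a i ∈ A ∧ b i ∈ A) ∨ (a i ∈ A ∧ b i ∈ sphere (0 : E 5) 1) ∨
          (a i ∈ sphere (0 : E 5) 1 ∧ b i ∈ A))

/-- `Γ` is a minimal `ℤ₂` connection for `A`: one of least `H¹` measure. -/
def IsMinimalZ2Connection (A : Finset (E 5)) (Γ : Set (E 5)) : Prop :=
  IsZ2Connection A Γ ∧ ∀ Γ' : Set (E 5), IsZ2Connection A Γ' → μH[1] Γ ≤ μH[1] Γ'

section Chunk7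
open scoped Classical

lemma sphere_not_A {A : Finset (E 5)} (hA : ↑A ⊆ ball (0 : E 5) 1) {x : E 5}
    (hx : x ∈ sphere (0 : E 5) 1) : x ∉ A := by
  intro h
  have h1 := normA hA h
  rw [mem_sphere_zero_iff_norm] at hx
  rw [hx] at h1
  norm_num at h1

lemma conn_lower {A : Finset (E 5)} (hA : ↑A ⊆ ball (0 : E 5) 1) {Γ' : Set (E 5)}
    (h : IsZ2Connection A Γ') :
    ∃ L, Blocks A L ∧ ENNReal.ofReal (cost L) ≤ μH[1] Γ' := by
  obtain ⟨n, g, a, b, harc, hsub, hdisj, hΓ, hend, huniq, hty⟩ := h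
  set F : Fin n → E 5 × E 5 := fun i =>
    if a i ∈ A ∧ b i ∈ A then (a i, b i)
    else if b i ∈ A then (b i, rad (b i)) else (a i, rad (a i)) with hF
  -- per index facts
  have key : ∀ i, BlockTy A (F i) ∧
      edist (F i).1 (F i).2 ≤ μH[1] (g i) ∧
      (∀ p ∈ A, ((p = a i ∨ p = b i) ↔ inB p (F i))) := by
    intro i
    have hne := isArc_ne (harc i)
    by_cases hc1 : a i ∈ A ∧ b i ∈ A
    · have hFi : F i = (a i, b i) := by rw [hF]; simp [hc1]
      refine ⟨?_, ?_, ?_⟩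
      · rw [hFi]; exact Or.inl ⟨hc1.1, hc1.2, hne⟩
      · rw [hFi]; exact isArc_lower (harc i)
      · intro t ht; rw [hFi]; rfl
    · have hsp : (a i ∈ A ∧ b i ∈ sphere (0:E 5) 1) ∨ (a i ∈ sphere (0:E 5) 1 ∧ b i ∈ A) := by
        rcases hty i with h | h | h
        · exact absurd h hc1
        · exact Or.inl h
        · exact Or.inr h
      rcases hsp with ⟨haA, hbS⟩ | ⟨haS, hbA⟩
      · have hbA : b i ∉ A := sphere_not_A hA hbS
        have hFi : F i = (a i, rad (a i)) := by
          simp only [hF]; rw [if_neg hc1, if_neg hbA]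
        have hbn : ‖b i‖ = 1 := mem_sphere_zero_iff_norm.mp hbS
        refine ⟨?_, ?_, ?_⟩
        · rw [hFi]; exact Or.inr ⟨haA, rfl⟩
        · rw [hFi]
          show edist (a i) (rad (a i)) ≤ μH[1] (g i)
          have h1 : dist (a i) (rad (a i)) ≤ dist (a i) (b i) := by
            rw [dist_rad _ (normA hA haA).le]
            have := norm_sub_norm_le (b i) (a i)
            rw [← dist_eq_norm, dist_comm] at this
            linarith [hbn ▸ this]
          calc edist (a i) (rad (a i)) = ENNReal.ofReal (dist (a i) (rad (a i))) :=
                edist_dist _ _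
            _ ≤ ENNReal.ofReal (dist (a i) (b i)) := ENNReal.ofReal_le_ofReal h1
            _ = edist (a i) (b i) := (edist_dist _ _).symm
            _ ≤ μH[1] (g i) := isArc_lower (harc i)
        · intro t ht
          rw [hFi]
          constructor
          · rintro (h | h)
            · exact Or.inl h
            · exact absurd (h ▸ ht) hbA
          · rintro (h | h)
            · exact Or.inl h
            · exact absurd h (A_ne_rad hA ht (a i))
      · have haA : a i ∉ A := sphere_not_A hA haS
        have hc1' : ¬(a i ∈ A ∧ b i ∈ A) := fun h => haA h.1
        have hFi : F i = (b i, rad (b i)) := by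
          simp only [hF]; rw [if_neg hc1', if_pos hbA]
        have han : ‖a i‖ = 1 := mem_sphere_zero_iff_norm.mp haS
        refine ⟨?_, ?_, ?_⟩
        · rw [hFi]; exact Or.inr ⟨hbA, rfl⟩
        · rw [hFi]
          show edist (b i) (rad (b i)) ≤ μH[1] (g i)
          have h1 : dist (b i) (rad (b i)) ≤ dist (a i) (b i) := by
            rw [dist_rad _ (normA hA hbA).le]
            have := norm_sub_norm_le (a i) (b i)
            rw [← dist_eq_norm] at this
            linarith [han ▸ this]
          calc edist (b i) (rad (b i)) = ENNReal.ofReal (dist (b i) (rad (b i))) :=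
                edist_dist _ _
            _ ≤ ENNReal.ofReal (dist (a i) (b i)) := ENNReal.ofReal_le_ofReal h1
            _ = edist (a i) (b i) := (edist_dist _ _).symm
            _ ≤ μH[1] (g i) := isArc_lower (harc i)
        · intro t ht
          rw [hFi]
          constructor
          · rintro (h | h)
            · exact absurd (h ▸ ht) haA
            · exact Or.inl h
          · rintro (h | h)
            · exact Or.inr h
            · exact absurd h (A_ne_rad hA ht (b i))
  have hF1A : ∀ i, (F i).1 ∈ A := fun i => blockTy_fst (key i).1
  have hFinj : Function.Injective F := by
    intro i j hij
    have h1 : (F i).1 = a i ∨ (F i).1 = b i :=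
      ((key i).2.2 (F i).1 (hF1A i)).mpr (Or.inl rfl)
    have h2 : (F i).1 = a j ∨ (F i).1 = b j := by
      have := ((key j).2.2 (F i).1 (hF1A i)).mpr (Or.inl (by rw [hij]))
      exact this
    obtain ⟨u, hu1, hu2⟩ := huniq (F i).1 (hF1A i)
    rw [hu2 i h1, hu2 j h2]
  refine ⟨Finset.image F Finset.univ, ⟨?_, ?_⟩, ?_⟩
  · intro z hz
    obtain ⟨i, _, rfl⟩ := Finset.mem_image.mp hz
    exact (key i).1
  · intro t ht
    obtain ⟨i, hti, htu⟩ := huniq t ht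
    refine ⟨F i, ⟨Finset.mem_image_of_mem _ (Finset.mem_univ i),
      ((key i).2.2 t ht).mp hti⟩, ?_⟩
    rintro v ⟨hv, hvt⟩
    obtain ⟨j, _, rfl⟩ := Finset.mem_image.mp hv
    have := ((key j).2.2 t ht).mpr hvt
    rw [htu j this]
  · have hmeas : ∀ i, MeasurableSet (g i) := fun i =>
      (isArc_compact (harc i)).measurableSet
    have hsum : μH[1] Γ' = ∑ i, μH[1] (g i) := by
      rw [hΓ, measure_iUnion hdisj hmeas, tsum_fintype]
    rw [hsum]
    unfold cost
    rw [Finset.sum_image (fun x _ y _ h => hFinj h)]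
    rw [ENNReal.ofReal_sum_of_nonneg (fun i _ => dist_nonneg)]
    apply Finset.sum_le_sum
    intro i _
    rw [← edist_dist]
    exact (key i).2.1

end Chunk7

section Chunk8
open scoped Classical

lemma radial_sphere {a x : E 5} (ha : ‖a‖ ≤ 1) (hx : x ∈ segment ℝ a (rad a))
    (hxn : ‖x‖ = 1) : x = rad a := by
  obtain ⟨m, hm1, hm2, hxm⟩ := mem_radial_seg ha hx
  have hm0 : 0 ≤ m := (norm_nonneg a).trans hm1
  have : m = 1 := by rw [hxm, norm_smul_rad hm0] at hxn; exact hxn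
  rw [hxm, this, one_smul]


/-- Every finite subset of `B⁵` admits a minimal `ℤ₂` connection, which may be chosen
to consist of finitely many pairwise disjoint closed straight segments, each either
joining two distinct points of `A` inside `B⁵`, or joining a point of `A` to `∂B⁵`
along a radius. -/
theorem stmt11 (A : Finset (E 5)) (hA : ↑A ⊆ ball (0 : E 5) 1) :
    ∃ Γ : Set (E 5), IsMinimalZ2Connection A Γ ∧
      ∃ (n : ℕ) (p q : Fin n → E 5),
        Γ = ⋃ i, segment ℝ (p i) (q i) ∧
        (Pairwise fun i j => Disjoint (segment ℝ (p i) (q i)) (segment ℝ (p j) (q j))) ∧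
        ∀ i,
          (p i ∈ A ∧ q i ∈ A ∧ p i ≠ q i ∧ segment ℝ (p i) (q i) ⊆ ball (0 : E 5) 1) ∨
          (p i ∈ A ∧ q i ∈ sphere (0 : E 5) 1 ∧ ∃ t : ℝ, 0 ≤ t ∧ t < 1 ∧ p i = t • q i) := by
  obtain ⟨L, hL, hmin⟩ := exists_min_blocks hA
  set n := L.card with hn
  set e : Fin n ≃ {x // x ∈ L} := L.equivFin.symm with he
  set p : Fin n → E 5 := fun i => (e i : E 5 × E 5).1 with hp
  set q : Fin n → E 5 := fun i => (e i : E 5 × E 5).2 with hq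
  set Γ : Set (E 5) := ⋃ i, segment ℝ (p i) (q i) with hΓ
  have hmemL : ∀ i, ((e i : E 5 × E 5)) ∈ L := fun i => (e i).2
  have hty : ∀ i, BlockTy A (e i : E 5 × E 5) := fun i => hL.1 _ (hmemL i)
  have hp1A : ∀ i, p i ∈ A := fun i => blockTy_fst (hty i)
  have hpballs : ∀ i, ‖p i‖ < 1 := fun i => normA hA (hp1A i)
  have hne : ∀ i, p i ≠ q i := by
    intro i
    rcases hty i with h | h
    · exact h.2.2
    · rw [hq]
      simp only
      rw [h.2]
      exact A_ne_rad hA (hp1A i) (p i)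
  have hcoe_inj : ∀ i j, (e i : E 5 × E 5) = (e j : E 5 × E 5) → i = j := by
    intro i j hij
    exact e.injective (Subtype.ext hij)
  have hpair : Pairwise fun i j =>
      Disjoint (segment ℝ (p i) (q i)) (segment ℝ (p j) (q j)) := by
    intro i j hij
    exact min_disjoint hA hL hmin (hmemL i) (hmemL j) (fun h => hij (hcoe_inj i j h))
  have hsegsub : ∀ i, (hty' : BlockTy A (e i : E 5 × E 5)) →
      (p i ∈ A ∧ q i ∈ A) ∨ (p i ∈ A ∧ q i = rad (p i)) := by
    intro i h
    rcases h with h | h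
    · exact Or.inl ⟨h.1, h.2.1⟩
    · exact Or.inr ⟨h.1, h.2⟩
  -- index of a block
  have hidx : ∀ z (hz : z ∈ L), ∃ i, (e i : E 5 × E 5) = z := by
    intro z hz
    exact ⟨e.symm ⟨z, hz⟩, by rw [Equiv.apply_symm_apply]⟩
  -- connection structure
  have hconn : IsZ2Connection A Γ := by
    refine ⟨n, fun i => segment ℝ (p i) (q i), p, q, ?_, ?_, hpair, rfl, ?_, ?_, ?_⟩
    · intro i
      exact isArc_segment (hne i)
    · intro i
      apply (convex_closedBall (0 : E 5) 1).segment_subset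
      · exact mem_closedBall_zero_iff.mpr (hpballs i).le
      · rcases hsegsub i (hty i) with h | h
        · exact mem_closedBall_zero_iff.mpr (normA hA h.2).le
        · rw [h.2]
          exact mem_closedBall_zero_iff.mpr (norm_rad (p i)).le
    · apply Set.Subset.antisymm
      · intro x hx
        obtain ⟨i, hi⟩ := Set.mem_iUnion.mp hx
        rcases hi with rfl | hi
        · exact Or.inl (hp1A i)
        · rw [Set.mem_singleton_iff] at hi
          subst hi
          rcases hsegsub i (hty i) with h | h
          · exact Or.inl h.2
          · refine Or.inr ⟨Set.mem_iUnion.mpr ⟨i, right_mem_segment _ _ _⟩, ?_⟩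
            rw [h.2]
            exact rad_mem_sphere (p i)
      · intro x hx
        rcases hx with hx | ⟨hxΓ, hxS⟩
        · obtain ⟨z, ⟨hzL, hzt⟩, _⟩ := hL.2 x hx
          obtain ⟨i, hi⟩ := hidx z hzL
          apply Set.mem_iUnion.mpr
          refine ⟨i, ?_⟩
          rcases hzt with h | h
          · left; rw [hp]; simp only; rw [hi, ← h]
          · right; rw [Set.mem_singleton_iff, hq]; simp only; rw [hi, ← h]
        · obtain ⟨i, hi⟩ := Set.mem_iUnion.mp hxΓ
          rcases hsegsub i (hty i) with h | h
          · exfalso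
            have : segment ℝ (p i) (q i) ⊆ ball (0 : E 5) 1 :=
              (convex_ball (0 : E 5) 1).segment_subset (hA (hp1A i)) (hA h.2)
            have h1 := mem_ball_zero_iff.mp (this hi)
            rw [mem_sphere_zero_iff_norm.mp hxS] at h1
            norm_num at h1
          · rw [h.2] at hi
            have := radial_sphere (hpballs i).le hi (mem_sphere_zero_iff_norm.mp hxS)
            apply Set.mem_iUnion.mpr
            refine ⟨i, Or.inr ?_⟩
            rw [Set.mem_singleton_iff, this]
            exact h.2.symm
    · intro t ht
      obtain ⟨z, ⟨hzL, hzt⟩, hzu⟩ := hL.2 t ht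
      obtain ⟨i, hi⟩ := hidx z hzL
      refine ⟨i, ?_, ?_⟩
      · rcases hzt with h | h
        · left; rw [hp]; simp only; rw [hi, ← h]
        · right; rw [hq]; simp only; rw [hi, ← h]
      · intro j hj
        have hjz : (e j : E 5 × E 5) = z := by
          apply hzu
          refine ⟨hmemL j, ?_⟩
          rcases hj with h | h
          · exact Or.inl h
          · exact Or.inr h
        apply hcoe_inj
        rw [hjz, hi]
    · intro i
      rcases hsegsub i (hty i) with h | h
      · exact Or.inl h
      · refine Or.inr (Or.inl ⟨h.1, ?_⟩)
        rw [h.2]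
        exact rad_mem_sphere (p i)
  -- measure of Γ is at most ofReal (cost L)
  have hΓle : μH[1] Γ ≤ ENNReal.ofReal (cost L) := by
    have h1 : μH[1] Γ ≤ ∑ i, μH[1] (segment ℝ (p i) (q i)) := by
      rw [hΓ]
      exact (measure_iUnion_le _).trans_eq (tsum_fintype _)
    have h2 : ∀ i, μH[1] (segment ℝ (p i) (q i)) = ENNReal.ofReal (dist (p i) (q i)) := by
      intro i
      rw [hausdorffMeasure_segment, edist_dist]
    have h3 : ∑ i, μH[1] (segment ℝ (p i) (q i))
        = ENNReal.ofReal (∑ i, dist (p i) (q i)) := by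
      rw [ENNReal.ofReal_sum_of_nonneg (fun i _ => dist_nonneg)]
      exact Finset.sum_congr rfl (fun i _ => h2 i)
    have h4 : ∑ i, dist (p i) (q i) = cost L := by
      unfold cost
      rw [← Finset.sum_attach L (fun z => dist z.1 z.2)]
      exact Fintype.sum_equiv e (fun i => dist (p i) (q i))
        (fun z => dist (z : E 5 × E 5).1 (z : E 5 × E 5).2) (fun i => rfl)
    rw [← h4, ← h3]
    exact h1
  refine ⟨Γ, ⟨hconn, ?_⟩, n, p, q, rfl, hpair, ?_⟩
  · intro Γ' hΓ'
    obtain ⟨L', hL', hcost⟩ := conn_lower hA hΓ'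
    exact hΓle.trans ((ENNReal.ofReal_le_ofReal (hmin L' hL')).trans hcost)
  · intro i
    rcases hsegsub i (hty i) with h | h
    · refine Or.inl ⟨h.1, h.2, hne i, ?_⟩
      exact (convex_ball (0 : E 5) 1).segment_subset (hA h.1) (hA h.2)
    · refine Or.inr ⟨h.1, ?_, ‖p i‖, norm_nonneg _, hpballs i, ?_⟩
      · rw [h.2]; exact rad_mem_sphere (p i)
      · rw [h.2]; exact (smul_rad (p i)).symm


end Chunk8

end
end

section
/- Let E be a real inner product space, U an open subset of ℝⁿ, and τ₁, τ₂, τ₃ : U → E differentiable maps whose values τ₁(x), τ₂(x), τ₃(x) are linearly independent at every x ∈ U. Let τ̃₁, τ̃₂, τ̃₃ be their pointwise Gram–Schmidt orthonormalizations: τ̃₁ = τ₁/‖τ₁‖, τ̃₂ = (τ₂ − ⟨τ̃₁,τ₂⟩τ̃₁)/‖τ₂ − ⟨τ̃₁,τ₂⟩τ̃₁‖, τ̃₃ = (τ₃ − ⟨τ̃₁,τ₃⟩τ̃₁ − ⟨τ̃₂,τ₃⟩τ̃₂)/‖τ₃ − ⟨τ̃₁,τ₃⟩τ̃₁ − ⟨τ̃₂,τ₃⟩τ̃₂‖.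 Then for every x ∈ U and each j ∈ {1,2,3}, ‖∇τ̃_j(x)‖ ≤ 32 · ( ‖τ₂(x)‖‖τ₃(x)‖‖∇τ₁(x)‖ + ‖τ₁(x)‖‖τ₃(x)‖‖∇τ₂(x)‖ + ‖τ₁(x)‖‖τ₂(x)‖‖∇τ₃(x)‖ ) / G(x), where G(x) = ‖τ₁∧τ₂∧τ₃‖(x) is the square root of the determinant of the 3×3 Gram matrix ( ⟨τ_i(x), τ_k(x)⟩ )_{i,k}. -/
open Set
open scoped RealInnerProductSpace

noncomputable section

variable {F : Type*} [NormedAddCommGroup F] [InnerProductSpace ℝ F]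

section Helpers
variable {E : Type*} [NormedAddCommGroup E] [NormedSpace ℝ E]

lemma proj_norm_le {e w : F} (he : ‖e‖ = 1) : ‖w - ⟪e, w⟫ • e‖ ≤ ‖w‖ := by
  have h1 : ‖w - ⟪e, w⟫ • e‖ ^ 2 = ‖w‖ ^ 2 - ⟪e, w⟫ ^ 2 := by
    rw [norm_sub_sq_real, inner_smul_right, norm_smul, real_inner_comm w e]
    simp [he, Real.norm_eq_abs, sq_abs]
    ring
  nlinarith [norm_nonneg (w - ⟪e, w⟫ • e), norm_nonneg w, sq_nonneg (⟪e, w⟫)]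

lemma hasFDerivAt_normalize {f : E → F} {f' : E →L[ℝ] F} {x : E}
    (hf : HasFDerivAt f f' x) (h0 : f x ≠ 0) :
    ∃ D : E →L[ℝ] F, HasFDerivAt (fun y => ‖f y‖⁻¹ • f y) D x ∧
      ∀ v, ‖D v‖ ≤ ‖f x‖⁻¹ * ‖f' v‖ := by
  have hA : (0:ℝ) < ‖f x‖ := norm_pos_iff.mpr h0
  have hnormsq : HasFDerivAt (fun y => ⟪f y, f y⟫) ((fderivInnerCLM ℝ (f x, f x)).comp (f'.prod f')) x :=
    hf.inner ℝ hf
  have hsq : ⟪f x, f x⟫ ≠ 0 := by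
    rw [real_inner_self_eq_norm_sq]; positivity
  have hnorm : HasFDerivAt (fun y => ‖f y‖)
      ((1 / (2 * Real.sqrt ⟪f x, f x⟫)) • ((fderivInnerCLM ℝ (f x, f x)).comp (f'.prod f'))) x := by
    have := hnormsq.sqrt hsq
    refine this.congr_of_eventuallyEq (Filter.Eventually.of_forall fun y => ?_)
    show ‖f y‖ = √⟪f y, f y⟫
    rw [real_inner_self_eq_norm_sq, Real.sqrt_sq (norm_nonneg _)]
  have hinv : HasFDerivAt (fun y => ‖f y‖⁻¹)
      ((-(‖f x‖ ^ 2)⁻¹) • ((1 / (2 * Real.sqrt ⟪f x, f x⟫)) • ((fderivInnerCLM ℝ (f x, f x)).comp (f'.prod f')))) x :=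
    (hasDerivAt_inv hA.ne').comp_hasFDerivAt x hnorm
  refine ⟨_, hinv.smul hf, fun v => ?_⟩
  set e : F := ‖f x‖⁻¹ • f x with he
  have hene : ‖e‖ = 1 := norm_smul_inv_norm h0
  have hsqrt : Real.sqrt ⟪f x, f x⟫ = ‖f x‖ := by
    rw [real_inner_self_eq_norm_sq, Real.sqrt_sq (norm_nonneg _)]
  have happ : (‖f x‖⁻¹ • f' +
      ((-(‖f x‖ ^ 2)⁻¹) • ((1 / (2 * Real.sqrt ⟪f x, f x⟫)) • ((fderivInnerCLM ℝ (f x, f x)).comp (f'.prod f')))).smulRight (f x)) v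
      = ‖f x‖⁻¹ • (f' v - ⟪e, f' v⟫ • e) := by
    simp only [ContinuousLinearMap.add_apply, ContinuousLinearMap.smul_apply,
      ContinuousLinearMap.smulRight_apply, ContinuousLinearMap.coe_comp', Function.comp_apply,
      ContinuousLinearMap.prod_apply, fderivInnerCLM_apply, hsqrt, he]
    rw [real_inner_smul_left, real_inner_comm (f x) (f' v)]
    match_scalars
    · ring
    · field_simp [hA.ne']
      ring_nf
      field_simp [hA.ne']
  rw [happ, norm_smul, norm_inv, norm_norm]
  gcongr
  exact proj_norm_le hene

lemma hasFDerivAt_inner_smul {u w : E → F} {u' w' : E →L[ℝ] F} {x : E}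
    (hu : HasFDerivAt u u' x) (hw : HasFDerivAt w w' x) (h1 : ‖u x‖ = 1) :
    ∃ P : E →L[ℝ] F, HasFDerivAt (fun y => ⟪u y, w y⟫ • u y) P x ∧
      ∀ v, ‖P v‖ ≤ ‖w' v‖ + 2 * ‖w x‖ * ‖u' v‖ := by
  have hinner : HasFDerivAt (fun y => ⟪u y, w y⟫)
      ((fderivInnerCLM ℝ (u x, w x)).comp (u'.prod w')) x := hu.inner ℝ hw
  refine ⟨_, hinner.smul hu, fun v => ?_⟩
  have happ : (⟪u x, w x⟫ • u' +
      ((fderivInnerCLM ℝ (u x, w x)).comp (u'.prod w')).smulRight (u x)) v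
      = ⟪u x, w x⟫ • u' v + (⟪u x, w' v⟫ + ⟪u' v, w x⟫) • u x := by
    simp [ContinuousLinearMap.add_apply, ContinuousLinearMap.smul_apply,
      ContinuousLinearMap.smulRight_apply, fderivInnerCLM_apply]
  rw [happ]
  have h2 : |⟪u x, w x⟫| ≤ ‖w x‖ := by
    calc |⟪u x, w x⟫| ≤ ‖u x‖ * ‖w x‖ := abs_real_inner_le_norm _ _
    _ = ‖w x‖ := by rw [h1, one_mul]
  have h3 : |⟪u x, w' v⟫| ≤ ‖w' v‖ := by
    calc |⟪u x, w' v⟫| ≤ ‖u x‖ * ‖w' v‖ := abs_real_inner_le_norm _ _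
    _ = ‖w' v‖ := by rw [h1, one_mul]
  have h4 : |⟪u' v, w x⟫| ≤ ‖u' v‖ * ‖w x‖ := abs_real_inner_le_norm _ _
  calc ‖⟪u x, w x⟫ • u' v + (⟪u x, w' v⟫ + ⟪u' v, w x⟫) • u x‖
      ≤ ‖⟪u x, w x⟫ • u' v‖ + ‖(⟪u x, w' v⟫ + ⟪u' v, w x⟫) • u x‖ := norm_add_le _ _
    _ = |⟪u x, w x⟫| * ‖u' v‖ + |⟪u x, w' v⟫ + ⟪u' v, w x⟫| * ‖u x‖ := by
        rw [norm_smul, norm_smul, Real.norm_eq_abs, Real.norm_eq_abs]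
    _ ≤ ‖w x‖ * ‖u' v‖ + (|⟪u x, w' v⟫| + |⟪u' v, w x⟫|) * 1 := by
        rw [h1]
        gcongr
        exact abs_add_le _ _
    _ ≤ ‖w x‖ * ‖u' v‖ + (‖w' v‖ + ‖u' v‖ * ‖w x‖) * 1 := by gcongr
    _ ≤ ‖w' v‖ + 2 * ‖w x‖ * ‖u' v‖ := by nlinarith [norm_nonneg (w x), norm_nonneg (u' v)]

private lemma aux_eq2 (A g B N1 N2 V : ℝ) (hA : A ≠ 0) (hg : g ≠ 0) :
    g⁻¹ * ((N2 * V) + ((N2 * V) + 2 * B * ((N1 / A) * V)))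
      = ((2 * A * N2 + 2 * B * N1) / (A * g)) * V := by
  field_simp
  ring

private lemma aux_eq3 (A g h B C N1 N2 N3 V : ℝ) (hA : A ≠ 0) (hg : g ≠ 0) (hh : h ≠ 0) :
    h⁻¹ * ((N3 * V) + ((N3 * V) + 2 * C * ((N1 / A) * V))
        + ((N3 * V) + 2 * C * (((2 * A * N2 + 2 * B * N1) / (A * g)) * V)))
      = ((3 * A * g * N3 + 2 * C * g * N1 + 4 * A * C * N2 + 4 * B * C * N1)
          / (A * g * h)) * V := by
  field_simp
  ring
end Helpers

/-- First Gram–Schmidt orthonormalization: `τ̃₁ = τ₁/‖τ₁‖`. -/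
def gs1 (τ₁ : EuclideanSpace ℝ (Fin n) → F) : EuclideanSpace ℝ (Fin n) → F :=
  fun x => ‖τ₁ x‖⁻¹ • τ₁ x

/-- Second Gram–Schmidt orthonormalization. -/
def gs2 (τ₁ τ₂ : EuclideanSpace ℝ (Fin n) → F) : EuclideanSpace ℝ (Fin n) → F :=
  fun x =>
    ‖τ₂ x - ⟪gs1 τ₁ x, τ₂ x⟫ • gs1 τ₁ x‖⁻¹ • (τ₂ x - ⟪gs1 τ₁ x, τ₂ x⟫ • gs1 τ₁ x)

/-- Third Gram–Schmidt orthonormalization. -/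
def gs3 (τ₁ τ₂ τ₃ : EuclideanSpace ℝ (Fin n) → F) : EuclideanSpace ℝ (Fin n) → F :=
  fun x =>
    ‖τ₃ x - ⟪gs1 τ₁ x, τ₃ x⟫ • gs1 τ₁ x - ⟪gs2 τ₁ τ₂ x, τ₃ x⟫ • gs2 τ₁ τ₂ x‖⁻¹ •
      (τ₃ x - ⟪gs1 τ₁ x, τ₃ x⟫ • gs1 τ₁ x - ⟪gs2 τ₁ τ₂ x, τ₃ x⟫ • gs2 τ₁ τ₂ x)

/-- `‖v₁∧v₂∧v₃‖`: the square root of the determinant of the Gram matrix. -/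
def gramNorm (a b c : F) : ℝ :=
  Real.sqrt (Matrix.det
    !![⟪a, a⟫, ⟪a, b⟫, ⟪a, c⟫;
       ⟪b, a⟫, ⟪b, b⟫, ⟪b, c⟫;
       ⟪c, a⟫, ⟪c, b⟫, ⟪c, c⟫])

/-- The derivatives of the pointwise Gram–Schmidt orthonormalizations of three
differentiable, pointwise linearly independent maps `τ₁, τ₂, τ₃ : U → E` satisfy
`‖∇τ̃ⱼ‖ ≤ 32(‖τ₂‖‖τ₃‖‖∇τ₁‖ + ‖τ₁‖‖τ₃‖‖∇τ₂‖ + ‖τ₁‖‖τ₂‖‖∇τ₃‖)/‖τ₁∧τ₂∧τ₃‖`. -/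
theorem stmt14 (n : ℕ) (U : Set (EuclideanSpace ℝ (Fin n))) (hU : IsOpen U)
    (τ₁ τ₂ τ₃ : EuclideanSpace ℝ (Fin n) → F)
    (hd1 : ∀ x ∈ U, DifferentiableAt ℝ τ₁ x)
    (hd2 : ∀ x ∈ U, DifferentiableAt ℝ τ₂ x)
    (hd3 : ∀ x ∈ U, DifferentiableAt ℝ τ₃ x)
    (hli : ∀ x ∈ U, LinearIndependent ℝ ![τ₁ x, τ₂ x, τ₃ x]) :
    ∀ x ∈ U,
      ‖fderiv ℝ (gs1 τ₁) x‖ ≤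
        32 * (‖τ₂ x‖ * ‖τ₃ x‖ * ‖fderiv ℝ τ₁ x‖ + ‖τ₁ x‖ * ‖τ₃ x‖ * ‖fderiv ℝ τ₂ x‖ +
          ‖τ₁ x‖ * ‖τ₂ x‖ * ‖fderiv ℝ τ₃ x‖) / gramNorm (τ₁ x) (τ₂ x) (τ₃ x) ∧
      ‖fderiv ℝ (gs2 τ₁ τ₂) x‖ ≤
        32 * (‖τ₂ x‖ * ‖τ₃ x‖ * ‖fderiv ℝ τ₁ x‖ + ‖τ₁ x‖ * ‖τ₃ x‖ * ‖fderiv ℝ τ₂ x‖ +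
          ‖τ₁ x‖ * ‖τ₂ x‖ * ‖fderiv ℝ τ₃ x‖) / gramNorm (τ₁ x) (τ₂ x) (τ₃ x) ∧
      ‖fderiv ℝ (gs3 τ₁ τ₂ τ₃) x‖ ≤
        32 * (‖τ₂ x‖ * ‖τ₃ x‖ * ‖fderiv ℝ τ₁ x‖ + ‖τ₁ x‖ * ‖τ₃ x‖ * ‖fderiv ℝ τ₂ x‖ +
          ‖τ₁ x‖ * ‖τ₂ x‖ * ‖fderiv ℝ τ₃ x‖) / gramNorm (τ₁ x) (τ₂ x) (τ₃ x) := by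
  intro x hx
  have h1 := (hd1 x hx).hasFDerivAt
  have h2 := (hd2 x hx).hasFDerivAt
  have h3 := (hd3 x hx).hasFDerivAt
  have hli' := hli x hx
  have ha0 : τ₁ x ≠ 0 := by simpa using hli'.ne_zero 0
  have hb0 : τ₂ x ≠ 0 := by simpa using hli'.ne_zero 1
  have hc0 : τ₃ x ≠ 0 := by simpa using hli'.ne_zero 2
  have hA : (0:ℝ) < ‖τ₁ x‖ := norm_pos_iff.mpr ha0
  have hB : (0:ℝ) < ‖τ₂ x‖ := norm_pos_iff.mpr hb0
  have hC : (0:ℝ) < ‖τ₃ x‖ := norm_pos_iff.mpr hc0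
  -- first normalization
  obtain ⟨D₁, hD₁, hD₁b⟩ := hasFDerivAt_normalize h1 ha0
  have hgs1 : HasFDerivAt (gs1 τ₁) D₁ x := hD₁
  have e1n : ‖gs1 τ₁ x‖ = 1 := norm_smul_inv_norm (𝕜 := ℝ) ha0
  -- Gram–Schmidt second vector
  obtain ⟨P₁, hP₁, hP₁b⟩ := hasFDerivAt_inner_smul hD₁ h2 e1n
  have hG : HasFDerivAt (fun y => τ₂ y - ⟪gs1 τ₁ y, τ₂ y⟫ • gs1 τ₁ y)
      (fderiv ℝ τ₂ x - P₁) x := h2.sub hP₁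
  set gv : F := τ₂ x - ⟪gs1 τ₁ x, τ₂ x⟫ • gs1 τ₁ x with hgv
  have hg0 : gv ≠ 0 := by
    intro heq
    have heq2 : τ₂ x - ⟪gs1 τ₁ x, τ₂ x⟫ • (‖τ₁ x‖⁻¹ • τ₁ x) = 0 := heq
    have hsum : ∑ i, (![⟪gs1 τ₁ x, τ₂ x⟫ * ‖τ₁ x‖⁻¹, -1, 0] i) • (![τ₁ x, τ₂ x, τ₃ x] i) = 0 := by
      simp only [Fin.sum_univ_three, Matrix.cons_val_zero, Matrix.cons_val_one, Matrix.head_cons,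
        Matrix.cons_val_two, Matrix.tail_cons]
      linear_combination (norm := module) -heq2
    have := Fintype.linearIndependent_iff.mp hli' _ hsum 1
    norm_num at this
  have hBg : (0:ℝ) < ‖gv‖ := norm_pos_iff.mpr hg0
  obtain ⟨D₂, hD₂, hD₂b⟩ := hasFDerivAt_normalize hG hg0
  have hgs2 : HasFDerivAt (gs2 τ₁ τ₂) D₂ x := hD₂
  have e2v : gs2 τ₁ τ₂ x = ‖gv‖⁻¹ • gv := rfl
  have e2n : ‖gs2 τ₁ τ₂ x‖ = 1 := norm_smul_inv_norm (𝕜 := ℝ) hg0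
  -- Gram–Schmidt third vector
  obtain ⟨P₂, hP₂, hP₂b⟩ := hasFDerivAt_inner_smul hD₁ h3 e1n
  obtain ⟨P₃, hP₃, hP₃b⟩ := hasFDerivAt_inner_smul hD₂ h3 e2n
  have hH : HasFDerivAt (fun y => τ₃ y - ⟪gs1 τ₁ y, τ₃ y⟫ • gs1 τ₁ y
      - ⟪gs2 τ₁ τ₂ y, τ₃ y⟫ • gs2 τ₁ τ₂ y) (fderiv ℝ τ₃ x - P₂ - P₃) x := (h3.sub hP₂).sub hP₃
  set hv : F := τ₃ x - ⟪gs1 τ₁ x, τ₃ x⟫ • gs1 τ₁ x - ⟪gs2 τ₁ τ₂ x, τ₃ x⟫ • gs2 τ₁ τ₂ x with hhv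
  have hh0 : hv ≠ 0 := by
    intro heq
    have heq2 : τ₃ x - ⟪gs1 τ₁ x, τ₃ x⟫ • (‖τ₁ x‖⁻¹ • τ₁ x) -
        ⟪gs2 τ₁ τ₂ x, τ₃ x⟫ • (‖gv‖⁻¹ • (τ₂ x - ⟪gs1 τ₁ x, τ₂ x⟫ • (‖τ₁ x‖⁻¹ • τ₁ x))) = 0 := heq
    have hsum : ∑ i, (![⟪gs1 τ₁ x, τ₃ x⟫ * ‖τ₁ x‖⁻¹
          - ⟪gs2 τ₁ τ₂ x, τ₃ x⟫ * ‖gv‖⁻¹ * ⟪gs1 τ₁ x, τ₂ x⟫ * ‖τ₁ x‖⁻¹,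
          ⟪gs2 τ₁ τ₂ x, τ₃ x⟫ * ‖gv‖⁻¹, -1] i) • (![τ₁ x, τ₂ x, τ₃ x] i) = 0 := by
      simp only [Fin.sum_univ_three, Matrix.cons_val_zero, Matrix.cons_val_one, Matrix.head_cons,
        Matrix.cons_val_two, Matrix.tail_cons]
      linear_combination (norm := module) -heq2
    have := Fintype.linearIndependent_iff.mp hli' _ hsum 2
    simp [Matrix.cons_val_two, Matrix.tail_cons, Matrix.head_cons] at this
  have hBh : (0:ℝ) < ‖hv‖ := norm_pos_iff.mpr hh0
  obtain ⟨D₃, hD₃, hD₃b⟩ := hasFDerivAt_normalize hH hh0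
  have hgs3 : HasFDerivAt (gs3 τ₁ τ₂ τ₃) D₃ x := hD₃
  -- gram norm identity and norm comparisons
  have he11 : ⟪gs1 τ₁ x, gs1 τ₁ x⟫ = 1 := by
    rw [real_inner_self_eq_norm_sq, e1n]; norm_num
  have ha' : τ₁ x = ‖τ₁ x‖ • gs1 τ₁ x := by
    show τ₁ x = ‖τ₁ x‖ • (‖τ₁ x‖⁻¹ • τ₁ x)
    rw [smul_inv_smul₀ hA.ne']
  have o1 : ⟪gs1 τ₁ x, gv⟫ = 0 := by
    rw [hgv]
    simp [inner_sub_right, inner_smul_right, he11, e1n]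
  have o1c : ⟪gv, gs1 τ₁ x⟫ = 0 := by rw [real_inner_comm]; exact o1
  have o1' : ⟪gs1 τ₁ x, gs2 τ₁ τ₂ x⟫ = 0 := by
    rw [e2v, real_inner_smul_right, o1, mul_zero]
  have qval : ⟪gs2 τ₁ τ₂ x, τ₃ x⟫ = ‖gv‖⁻¹ * ⟪gv, τ₃ x⟫ := by
    rw [e2v, real_inner_smul_left]
  have o2 : ⟪gs1 τ₁ x, hv⟫ = 0 := by
    rw [hhv]
    simp [inner_sub_right, inner_smul_right, he11, o1', e1n]
  have o2c : ⟪hv, gs1 τ₁ x⟫ = 0 := by rw [real_inner_comm]; exact o2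
  have ogg : ⟪gv, gs2 τ₁ τ₂ x⟫ = ‖gv‖ := by
    rw [e2v, real_inner_smul_right, real_inner_self_eq_norm_sq, sq, inv_mul_cancel_left₀ hBg.ne']
  have o3 : ⟪gv, hv⟫ = 0 := by
    rw [hhv]
    simp only [inner_sub_right, inner_smul_right, o1c, mul_zero, sub_zero, ogg, qval]
    field_simp
    ring
  have o3c : ⟪hv, gv⟫ = 0 := by rw [real_inner_comm]; exact o3
  have hb' : τ₂ x = gv + ⟪gs1 τ₁ x, τ₂ x⟫ • gs1 τ₁ x := by
    rw [hgv]; module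
  have hc' : τ₃ x = hv + ⟪gs1 τ₁ x, τ₃ x⟫ • gs1 τ₁ x
      + (⟪gs2 τ₁ τ₂ x, τ₃ x⟫ * ‖gv‖⁻¹) • gv := by
    rw [hhv, e2v]; module
  have haa : ⟪τ₁ x, τ₁ x⟫ = ‖τ₁ x‖ ^ 2 := real_inner_self_eq_norm_sq _
  have hab : ⟪τ₁ x, τ₂ x⟫ = ‖τ₁ x‖ * ⟪gs1 τ₁ x, τ₂ x⟫ := by
    conv_lhs => rw [ha']
    rw [real_inner_smul_left]
  have hba : ⟪τ₂ x, τ₁ x⟫ = ‖τ₁ x‖ * ⟪gs1 τ₁ x, τ₂ x⟫ := by rw [real_inner_comm]; exact hab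
  have hac : ⟪τ₁ x, τ₃ x⟫ = ‖τ₁ x‖ * ⟪gs1 τ₁ x, τ₃ x⟫ := by
    conv_lhs => rw [ha']
    rw [real_inner_smul_left]
  have hca : ⟪τ₃ x, τ₁ x⟫ = ‖τ₁ x‖ * ⟪gs1 τ₁ x, τ₃ x⟫ := by rw [real_inner_comm]; exact hac
  have hbb : ⟪τ₂ x, τ₂ x⟫ = ‖gv‖ ^ 2 + ⟪gs1 τ₁ x, τ₂ x⟫ ^ 2 := by
    conv_lhs => rw [hb']
    simp only [inner_add_left, inner_add_right, real_inner_smul_left, real_inner_smul_right,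
      o1, o1c, he11, real_inner_self_eq_norm_sq, norm_smul, e1n, Real.norm_eq_abs, mul_one, sq_abs]
    ring
  have hbc : ⟪τ₂ x, τ₃ x⟫ = (⟪gs2 τ₁ τ₂ x, τ₃ x⟫ * ‖gv‖⁻¹) * ‖gv‖ ^ 2
      + ⟪gs1 τ₁ x, τ₂ x⟫ * ⟪gs1 τ₁ x, τ₃ x⟫ := by
    conv_lhs => rw [hb', hc']
    simp only [inner_add_left, inner_add_right, real_inner_smul_left, real_inner_smul_right,
      o1, o1c, o2, o2c, o3, o3c, he11, real_inner_self_eq_norm_sq, norm_smul, e1n,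
      Real.norm_eq_abs, mul_one, sq_abs]
    ring
  have hcb : ⟪τ₃ x, τ₂ x⟫ = (⟪gs2 τ₁ τ₂ x, τ₃ x⟫ * ‖gv‖⁻¹) * ‖gv‖ ^ 2
      + ⟪gs1 τ₁ x, τ₂ x⟫ * ⟪gs1 τ₁ x, τ₃ x⟫ := by rw [real_inner_comm]; exact hbc
  have hcc : ⟪τ₃ x, τ₃ x⟫ = ‖hv‖ ^ 2 + ⟪gs1 τ₁ x, τ₃ x⟫ ^ 2
      + (⟪gs2 τ₁ τ₂ x, τ₃ x⟫ * ‖gv‖⁻¹) ^ 2 * ‖gv‖ ^ 2 := by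
    conv_lhs => rw [hc']
    simp only [inner_add_left, inner_add_right, real_inner_smul_left, real_inner_smul_right,
      o1, o1c, o2, o2c, o3, o3c, he11, real_inner_self_eq_norm_sq, norm_smul, e1n,
      Real.norm_eq_abs, mul_one, mul_pow, sq_abs]
    ring
  have hgram : gramNorm (τ₁ x) (τ₂ x) (τ₃ x) = ‖τ₁ x‖ * ‖gv‖ * ‖hv‖ := by
    have hdet : Matrix.det
        !![⟪τ₁ x, τ₁ x⟫, ⟪τ₁ x, τ₂ x⟫, ⟪τ₁ x, τ₃ x⟫;
           ⟪τ₂ x, τ₁ x⟫, ⟪τ₂ x, τ₂ x⟫, ⟪τ₂ x, τ₃ x⟫;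
           ⟪τ₃ x, τ₁ x⟫, ⟪τ₃ x, τ₂ x⟫, ⟪τ₃ x, τ₃ x⟫]
        = (‖τ₁ x‖ * ‖gv‖ * ‖hv‖) ^ 2 := by
      simp only [Matrix.det_fin_three, Matrix.of_apply, Matrix.cons_val', Matrix.cons_val_zero,
        Matrix.empty_val', Matrix.cons_val_fin_one, Matrix.cons_val_one, Matrix.head_cons,
        Matrix.head_fin_const, Matrix.cons_val_two, Matrix.tail_cons, Matrix.tail_val']
      rw [haa, hab, hba, hac, hca, hbb, hbc, hcb, hcc]
      have : ‖gv‖⁻¹ * ‖gv‖ = 1 := inv_mul_cancel₀ hBg.ne'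
      field_simp
      ring
    rw [gramNorm, hdet, Real.sqrt_sq (by positivity)]
  have hgB : ‖gv‖ ≤ ‖τ₂ x‖ := by
    have h := hbb
    rw [real_inner_self_eq_norm_sq] at h
    have hsq : ‖gv‖ ^ 2 ≤ ‖τ₂ x‖ ^ 2 := by
      have := sq_nonneg (⟪gs1 τ₁ x, τ₂ x⟫ : ℝ)
      linarith
    calc ‖gv‖ = Real.sqrt (‖gv‖ ^ 2) := (Real.sqrt_sq (norm_nonneg _)).symm
      _ ≤ Real.sqrt (‖τ₂ x‖ ^ 2) := Real.sqrt_le_sqrt hsq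
      _ = ‖τ₂ x‖ := Real.sqrt_sq (norm_nonneg _)
  have hhC : ‖hv‖ ≤ ‖τ₃ x‖ := by
    have h := hcc
    rw [real_inner_self_eq_norm_sq] at h
    have hsq : ‖hv‖ ^ 2 ≤ ‖τ₃ x‖ ^ 2 := by
      have h1' := sq_nonneg (⟪gs1 τ₁ x, τ₃ x⟫ : ℝ)
      have h2' := mul_nonneg (sq_nonneg ((⟪gs2 τ₁ τ₂ x, τ₃ x⟫ : ℝ) * ‖gv‖⁻¹)) (sq_nonneg ‖gv‖)
      linarith
    calc ‖hv‖ = Real.sqrt (‖hv‖ ^ 2) := (Real.sqrt_sq (norm_nonneg _)).symm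
      _ ≤ Real.sqrt (‖τ₃ x‖ ^ 2) := Real.sqrt_le_sqrt hsq
      _ = ‖τ₃ x‖ := Real.sqrt_sq (norm_nonneg _)
  rw [← hgv] at hD₂b
  rw [← hhv] at hD₃b
  clear_value gv hv
  clear hD₁ hD₂ hD₃ hP₁ hP₂ hP₃ hG hH o1 o1c o1' o2 o2c o3 o3c ogg qval he11 ha' hb' hc'
  clear haa hab hba hac hca hbb hbc hcb hcc hgv hhv e2v hli' hd1 hd2 hd3 hU hli h1 h2 h3
  -- abbreviations
  set N1 := ‖fderiv ℝ τ₁ x‖ with hN1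
  set N2 := ‖fderiv ℝ τ₂ x‖ with hN2
  set N3 := ‖fderiv ℝ τ₃ x‖ with hN3
  have hN1' : (0:ℝ) ≤ N1 := norm_nonneg _
  have hN2' : (0:ℝ) ≤ N2 := norm_nonneg _
  have hN3' : (0:ℝ) ≤ N3 := norm_nonneg _
  -- pointwise bounds
  have pb1 : ∀ v, ‖D₁ v‖ ≤ (N1 / ‖τ₁ x‖) * ‖v‖ := by
    intro v
    calc ‖D₁ v‖ ≤ ‖τ₁ x‖⁻¹ * ‖(fderiv ℝ τ₁ x) v‖ := hD₁b v
      _ ≤ ‖τ₁ x‖⁻¹ * (N1 * ‖v‖) := by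
          gcongr
          exact (fderiv ℝ τ₁ x).le_opNorm v
      _ = (N1 / ‖τ₁ x‖) * ‖v‖ := by field_simp
  have hD₁n : ‖D₁‖ ≤ N1 / ‖τ₁ x‖ :=
    ContinuousLinearMap.opNorm_le_bound _ (by positivity) pb1
  have pb2 : ∀ v, ‖D₂ v‖ ≤ ((2 * ‖τ₁ x‖ * N2 + 2 * ‖τ₂ x‖ * N1) / (‖τ₁ x‖ * ‖gv‖)) * ‖v‖ := by
    intro v
    have e1 : ‖(fderiv ℝ τ₂ x - P₁) v‖ ≤ ‖(fderiv ℝ τ₂ x) v‖ + ‖P₁ v‖ := by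
      rw [ContinuousLinearMap.sub_apply]; exact norm_sub_le _ _
    have e2 := hP₁b v
    have e3 := pb1 v
    have e4 : ‖(fderiv ℝ τ₂ x) v‖ ≤ N2 * ‖v‖ := (fderiv ℝ τ₂ x).le_opNorm v
    have e5 : ‖D₁ v‖ ≥ 0 := norm_nonneg _
    have e6 := mul_le_mul_of_nonneg_left e3 (show (0:ℝ) ≤ 2 * ‖τ₂ x‖ by positivity)
    calc ‖D₂ v‖ ≤ ‖gv‖⁻¹ * ‖(fderiv ℝ τ₂ x - P₁) v‖ := hD₂b v
      _ ≤ ‖gv‖⁻¹ * ((N2 * ‖v‖) + ((N2 * ‖v‖) + 2 * ‖τ₂ x‖ * ((N1 / ‖τ₁ x‖) * ‖v‖))) := by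
          refine mul_le_mul_of_nonneg_left ?_ (by positivity)
          linarith
      _ = ((2 * ‖τ₁ x‖ * N2 + 2 * ‖τ₂ x‖ * N1) / (‖τ₁ x‖ * ‖gv‖)) * ‖v‖ :=
          aux_eq2 _ _ _ _ _ _ hA.ne' hBg.ne'
  have hD₂n : ‖D₂‖ ≤ (2 * ‖τ₁ x‖ * N2 + 2 * ‖τ₂ x‖ * N1) / (‖τ₁ x‖ * ‖gv‖) :=
    ContinuousLinearMap.opNorm_le_bound _ (by positivity) pb2
  have pb3 : ∀ v, ‖D₃ v‖ ≤ ((3 * ‖τ₁ x‖ * ‖gv‖ * N3 + 2 * ‖τ₃ x‖ * ‖gv‖ * N1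
      + 4 * ‖τ₁ x‖ * ‖τ₃ x‖ * N2 + 4 * ‖τ₂ x‖ * ‖τ₃ x‖ * N1)
        / (‖τ₁ x‖ * ‖gv‖ * ‖hv‖)) * ‖v‖ := by
    intro v
    have e1 : ‖(fderiv ℝ τ₃ x - P₂ - P₃) v‖ ≤ ‖(fderiv ℝ τ₃ x) v‖ + ‖P₂ v‖ + ‖P₃ v‖ := by
      rw [ContinuousLinearMap.sub_apply, ContinuousLinearMap.sub_apply]
      exact (norm_sub_le _ _).trans (by gcongr; exact norm_sub_le _ _)
    have e2 := hP₂b v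
    have e3 := hP₃b v
    have e4 : ‖(fderiv ℝ τ₃ x) v‖ ≤ N3 * ‖v‖ := (fderiv ℝ τ₃ x).le_opNorm v
    have e5 := pb1 v
    have e6 := pb2 v
    have e7 := mul_le_mul_of_nonneg_left e5 (show (0:ℝ) ≤ 2 * ‖τ₃ x‖ by positivity)
    have e8 := mul_le_mul_of_nonneg_left e6 (show (0:ℝ) ≤ 2 * ‖τ₃ x‖ by positivity)
    calc ‖D₃ v‖ ≤ ‖hv‖⁻¹ * ‖(fderiv ℝ τ₃ x - P₂ - P₃) v‖ := hD₃b v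
      _ ≤ ‖hv‖⁻¹ * ((N3 * ‖v‖) + ((N3 * ‖v‖) + 2 * ‖τ₃ x‖ * ((N1 / ‖τ₁ x‖) * ‖v‖))
            + ((N3 * ‖v‖) + 2 * ‖τ₃ x‖ *
              (((2 * ‖τ₁ x‖ * N2 + 2 * ‖τ₂ x‖ * N1) / (‖τ₁ x‖ * ‖gv‖)) * ‖v‖))) := by
          refine mul_le_mul_of_nonneg_left ?_ (by positivity)
          linarith
      _ = ((3 * ‖τ₁ x‖ * ‖gv‖ * N3 + 2 * ‖τ₃ x‖ * ‖gv‖ * N1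
            + 4 * ‖τ₁ x‖ * ‖τ₃ x‖ * N2 + 4 * ‖τ₂ x‖ * ‖τ₃ x‖ * N1)
            / (‖τ₁ x‖ * ‖gv‖ * ‖hv‖)) * ‖v‖ :=
          aux_eq3 _ _ _ _ _ _ _ _ _ hA.ne' hBg.ne' hBh.ne'
  have hD₃n : ‖D₃‖ ≤ (3 * ‖τ₁ x‖ * ‖gv‖ * N3 + 2 * ‖τ₃ x‖ * ‖gv‖ * N1
      + 4 * ‖τ₁ x‖ * ‖τ₃ x‖ * N2 + 4 * ‖τ₂ x‖ * ‖τ₃ x‖ * N1) / (‖τ₁ x‖ * ‖gv‖ * ‖hv‖) :=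
    ContinuousLinearMap.opNorm_le_bound _ (by positivity) pb3
  -- final comparisons
  have m1 : (0:ℝ) ≤ ‖τ₁ x‖ * ‖τ₂ x‖ * ‖τ₃ x‖ * N1 := by positivity
  have m2 : (0:ℝ) ≤ ‖τ₁ x‖ * ‖τ₁ x‖ * ‖τ₃ x‖ * N2 := by positivity
  have m3 : (0:ℝ) ≤ ‖τ₁ x‖ * ‖τ₁ x‖ * ‖τ₂ x‖ * N3 := by positivity
  have mS : (0:ℝ) ≤ ‖τ₂ x‖ * ‖τ₃ x‖ * N1 + ‖τ₁ x‖ * ‖τ₃ x‖ * N2 + ‖τ₁ x‖ * ‖τ₂ x‖ * N3 := by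
    positivity
  refine ⟨?_, ?_, ?_⟩
  · rw [hgs1.fderiv, hgram]
    refine hD₁n.trans ?_
    rw [div_le_div_iff₀ hA (by positivity)]
    have k1 : ‖gv‖ * ‖hv‖ ≤ ‖τ₂ x‖ * ‖τ₃ x‖ :=
      mul_le_mul hgB hhC (norm_nonneg _) hB.le
    have k2 : N1 * (‖gv‖ * ‖hv‖) ≤ N1 * (‖τ₂ x‖ * ‖τ₃ x‖) :=
      mul_le_mul_of_nonneg_left k1 hN1'
    have k3 : N1 * (‖gv‖ * ‖hv‖) * ‖τ₁ x‖ ≤ N1 * (‖τ₂ x‖ * ‖τ₃ x‖) * ‖τ₁ x‖ :=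
      mul_le_mul_of_nonneg_right k2 hA.le
    linarith [k3, m1, m2, m3]
  · rw [hgs2.fderiv, hgram]
    refine hD₂n.trans ?_
    rw [div_le_div_iff₀ (by positivity) (by positivity)]
    have k1 : (2 * ‖τ₁ x‖ * N2 + 2 * ‖τ₂ x‖ * N1) * ‖hv‖
        ≤ (2 * ‖τ₁ x‖ * N2 + 2 * ‖τ₂ x‖ * N1) * ‖τ₃ x‖ := by
      gcongr
    have k2 : (2 * ‖τ₁ x‖ * N2 + 2 * ‖τ₂ x‖ * N1) * ‖τ₃ x‖
        ≤ 32 * (‖τ₂ x‖ * ‖τ₃ x‖ * N1 + ‖τ₁ x‖ * ‖τ₃ x‖ * N2 + ‖τ₁ x‖ * ‖τ₂ x‖ * N3) := by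
      linarith [mul_nonneg (mul_nonneg hA.le hC.le) hN2',
        mul_nonneg (mul_nonneg hB.le hC.le) hN1',
        mul_nonneg (mul_nonneg hA.le hB.le) hN3']
    have k3 := mul_le_mul_of_nonneg_left (k1.trans k2)
      (show (0:ℝ) ≤ ‖τ₁ x‖ * ‖gv‖ by positivity)
    linarith [k3]
  · rw [hgs3.fderiv, hgram]
    refine hD₃n.trans ?_
    rw [div_le_div_iff₀ (by positivity) (by positivity)]
    have k1 : ‖τ₁ x‖ * N3 * ‖gv‖ ≤ ‖τ₁ x‖ * N3 * ‖τ₂ x‖ := by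
      gcongr
    have k2 : ‖τ₃ x‖ * N1 * ‖gv‖ ≤ ‖τ₃ x‖ * N1 * ‖τ₂ x‖ := by
      gcongr
    have k4 : (3 * ‖τ₁ x‖ * ‖gv‖ * N3 + 2 * ‖τ₃ x‖ * ‖gv‖ * N1
        + 4 * ‖τ₁ x‖ * ‖τ₃ x‖ * N2 + 4 * ‖τ₂ x‖ * ‖τ₃ x‖ * N1)
        ≤ 32 * (‖τ₂ x‖ * ‖τ₃ x‖ * N1 + ‖τ₁ x‖ * ‖τ₃ x‖ * N2 + ‖τ₁ x‖ * ‖τ₂ x‖ * N3) := by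
      linarith [k1, k2, mul_nonneg (mul_nonneg hA.le hC.le) hN2',
        mul_nonneg (mul_nonneg hB.le hC.le) hN1',
        mul_nonneg (mul_nonneg hA.le hB.le) hN3']
    have k5 := mul_le_mul_of_nonneg_left k4
      (show (0:ℝ) ≤ ‖τ₁ x‖ * ‖gv‖ * ‖hv‖ by positivity)
    linarith [k5]

end
end
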